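/- arXiv:2111.06270 — 8 statements merged into one kernel-verified Lean document; each statement's English description precedes it below -/
import Mathlib

section
/- For every c = (c₁₁,c₁₂,c₂₁,c₂₂) ∈ ℝ⁴, there exist u,v ∈ ℝ such that the matrix C(c,u,v) is positive semidefinite if and only if c ∈ [−1,1]⁴ and (g(c) ≥ 0 or h(c) ≥ 0). -/
/-- The 4×4 matrix `C(c,u,v)` with rows `(1,u,c₁₁,c₁₂)`, `(u,1,c₂₁,c₂₂)`,
`(c₁₁,c₂₁,1,v)`, `(c₁₂,c₂₂,v,1)`, where `c = (c 0, c 1, c 2, c 3) = (c₁₁,c₁₂,c₂₁,c₂₂)`. -/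
def Cmat (c : Fin 4 → ℝ) (u v : ℝ) : Matrix (Fin 4) (Fin 4) ℝ :=
  !![1, u, c 0, c 1;
     u, 1, c 2, c 3;
     c 0, c 2, 1, v;
     c 1, c 3, v, 1]

/-- The quantum correlation body `Q`. -/
def Qbody : Set (Fin 4 → ℝ) := {c | ∃ u v : ℝ, (Cmat c u v).PosSemidef}

/-- The polynomial `g`. -/
def gpoly (c : Fin 4 → ℝ) : ℝ :=
  2 - (c 0 ^ 2 + c 1 ^ 2 + c 2 ^ 2 + c 3 ^ 2) + 2 * c 0 * c 1 * c 2 * c 3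

/-- The polynomial `h`. -/
def hpoly (c : Fin 4 → ℝ) : ℝ :=
  4 * (1 - c 0 ^ 2) * (1 - c 1 ^ 2) * (1 - c 2 ^ 2) * (1 - c 3 ^ 2) - gpoly c ^ 2

/-!
The two principal 3×3 minors of `C(c,u,v)` containing `u` say that `u` lies in the interval of
centre `c₁₁c₂₁` and radius `√s`, `s = (1-c₁₁²)(1-c₂₁²)`, and in that of centre `c₁₂c₂₂` and
radius `√t`, `t = (1-c₁₂²)(1-c₂₂²)`. Conversely, when both minors are nonnegative an explicit
Cholesky factor produces a suitable `v` (the unknown pattern is chordal). So `c ∈ Q` iff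
`c ∈ [-1,1]⁴` and the two intervals meet, i.e. `|c₁₁c₂₁ - c₁₂c₂₂| ≤ √s + √t`. Squaring, and since
`s + t - (c₁₁c₂₁ - c₁₂c₂₂)² = g`, this reads `-g ≤ 2√(st)`, that is `g ≥ 0` or `g² ≤ 4st`,
and `4st - g² = h`.
-/

open Matrix

lemma exists_abs_sub_le_and_abs_sub_le_iff {p q r s : ℝ} (hr : 0 ≤ r) (hs : 0 ≤ s) :
    (∃ u, |u - p| ≤ r ∧ |u - q| ≤ s) ↔ |p - q| ≤ r + s := by
  simp only [← Real.dist_eq]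
  refine ⟨fun ⟨u, hp, hq⟩ => (dist_triangle_left p q u).trans (add_le_add hp hq), fun h => ?_⟩
  obtain ⟨u, hp, hq⟩ := exists_dist_le_le hr hs (by rwa [add_comm] : dist p q ≤ s + r)
  exact ⟨u, by rwa [dist_comm], hq⟩

lemma neg_le_sqrt_iff (x y : ℝ) : -x ≤ √y ↔ 0 ≤ x ∨ x ^ 2 ≤ y := by
  rcases le_or_gt 0 x with hx | hx
  · simp only [hx, true_or, iff_true]
    linarith [Real.sqrt_nonneg y]
  · rw [Real.le_sqrt' (by linarith), neg_sq]
    simp [hx.not_ge]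

lemma abs_le_sqrt_add_sqrt_iff {d s t : ℝ} (hs : 0 ≤ s) (ht : 0 ≤ t) :
    |d| ≤ √s + √t ↔ 0 ≤ s + t - d ^ 2 ∨ (s + t - d ^ 2) ^ 2 ≤ 4 * s * t := by
  have hst : (√s + √t) ^ 2 = s + t + √(4 * s * t) := by
    rw [add_sq, Real.sq_sqrt hs, Real.sq_sqrt ht, mul_assoc 4, Real.sqrt_mul' _ (mul_nonneg hs ht),
      Real.sqrt_mul hs]
    norm_num
    ring
  rw [← neg_le_sqrt_iff, ← sq_le_sq₀ (abs_nonneg d) (by positivity), sq_abs, hst]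
  constructor <;> intro h <;> linarith

lemma sq_le_one_of_sq_sub_mul_le {a b u : ℝ} (ha : a ^ 2 ≤ 1) (hb : b ^ 2 ≤ 1)
    (h : (u - a * b) ^ 2 ≤ (1 - a ^ 2) * (1 - b ^ 2)) : u ^ 2 ≤ 1 := by
  have hab : (a * b) ^ 2 ≤ 1 := by rw [mul_pow]; exact mul_le_one₀ ha (sq_nonneg b) hb
  have h₁ : (u - a * b) ^ 2 ≤ (1 - a * b) ^ 2 := h.trans (by nlinarith [sq_nonneg (a - b)])
  have h₂ : (u - a * b) ^ 2 ≤ (1 + a * b) ^ 2 := h.trans (by nlinarith [sq_nonneg (a + b)])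
  rw [sq_le_one_iff_abs_le_one, abs_le] at hab ⊢
  have := abs_le_of_sq_le_sq' h₁ (by linarith)
  have := abs_le_of_sq_le_sq' h₂ (by linarith)
  constructor <;> linarith

lemma exists_mul_eq_and_sq_le {w x y : ℝ} (hy : 0 ≤ y) (h : x ^ 2 ≤ y * w ^ 2) :
    ∃ b, w * b = x ∧ b ^ 2 ≤ y := by
  rcases eq_or_ne w 0 with rfl | hw
  · exact ⟨0, by nlinarith [sq_nonneg x], by simpa using hy⟩
  · refine ⟨x / w, mul_div_cancel₀ x hw, ?_⟩
    rwa [div_pow, div_le_iff₀ (by positivity)]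

lemma Matrix.PosSemidef.sq_apply_le {n : Type*} [Fintype n] [DecidableEq n]
    {M : Matrix n n ℝ} (hM : M.PosSemidef) (i j : n) : M i j ^ 2 ≤ M i i * M j j := by
  have hdet := (hM.submatrix ![i, j]).det_nonneg
  rw [det_fin_two] at hdet
  have hsymm : M j i = M i j := by simpa using hM.isHermitian.apply i j
  simp only [submatrix_apply, Matrix.cons_val_zero, Matrix.cons_val_one, hsymm] at hdet
  linarith

lemma sq_le_one_of_posSemidef_Cmat {c : Fin 4 → ℝ} {u v : ℝ} (h : (Cmat c u v).PosSemidef)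
    (i : Fin 4) : c i ^ 2 ≤ 1 := by
  fin_cases i
  · simpa [Cmat] using h.sq_apply_le 0 2
  · simpa [Cmat] using h.sq_apply_le 0 3
  · simpa [Cmat] using h.sq_apply_le 1 2
  · simpa [Cmat] using h.sq_apply_le 1 3

lemma sq_sub_mul_le_of_posSemidef_Cmat {c : Fin 4 → ℝ} {u v : ℝ} (h : (Cmat c u v).PosSemidef) :
    (u - c 0 * c 2) ^ 2 ≤ (1 - c 0 ^ 2) * (1 - c 2 ^ 2) ∧
      (u - c 1 * c 3) ^ 2 ≤ (1 - c 1 ^ 2) * (1 - c 3 ^ 2) := by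
  have h₀₁₂ := (h.submatrix ![0, 1, 2]).det_nonneg
  have h₀₁₃ := (h.submatrix ![0, 1, 3]).det_nonneg
  rw [det_fin_three] at h₀₁₂ h₀₁₃
  simp only [Cmat, submatrix_apply, of_apply, cons_val', cons_val_zero, cons_val_one, cons_val,
    cons_val_fin_one, mul_one, one_mul, sub_nonneg] at h₀₁₂ h₀₁₃
  exact ⟨by linear_combination h₀₁₂, by linear_combination h₀₁₃⟩

-- The columns of `L` are unit vectors with Gram matrix `C`; putting `g₁` and `g₂` in different
-- coordinates is what fixes `v = c₁₁c₁₂ + b₁b₂`.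
lemma posSemidef_Cmat_of_cholesky (c : Fin 4 → ℝ) {u w b₁ b₂ g₁ g₂ : ℝ}
    (hw : w ^ 2 = 1 - u ^ 2) (hb₁ : w * b₁ = c 2 - u * c 0) (hb₂ : w * b₂ = c 3 - u * c 1)
    (hg₁ : g₁ ^ 2 = 1 - c 0 ^ 2 - b₁ ^ 2) (hg₂ : g₂ ^ 2 = 1 - c 1 ^ 2 - b₂ ^ 2) :
    (Cmat c u (c 0 * c 1 + b₁ * b₂)).PosSemidef := by
  let L : Matrix (Fin 4) (Fin 4) ℝ := !![1, u, c 0, c 1; 0, w, b₁, b₂; 0, 0, g₁, 0; 0, 0, 0, g₂]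
  have hL : Cmat c u (c 0 * c 1 + b₁ * b₂) = Lᴴ * L := by
    ext i j
    fin_cases i <;> fin_cases j <;>
      simp [L, Cmat, Matrix.mul_apply, Fin.sum_univ_four] <;> linarith
  exact hL ▸ posSemidef_conjTranspose_mul_self L

lemma exists_posSemidef_Cmat {c : Fin 4 → ℝ} {u : ℝ} (hc : ∀ i, c i ^ 2 ≤ 1)
    (h₀₂ : (u - c 0 * c 2) ^ 2 ≤ (1 - c 0 ^ 2) * (1 - c 2 ^ 2))
    (h₁₃ : (u - c 1 * c 3) ^ 2 ≤ (1 - c 1 ^ 2) * (1 - c 3 ^ 2)) :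
    ∃ v, (Cmat c u v).PosSemidef := by
  have hw : √(1 - u ^ 2) ^ 2 = 1 - u ^ 2 :=
    Real.sq_sqrt (sub_nonneg.2 (sq_le_one_of_sq_sub_mul_le (hc 0) (hc 2) h₀₂))
  obtain ⟨b₁, hb₁, hb₁_sq⟩ := exists_mul_eq_and_sq_le (sub_nonneg.2 (hc 0))
    (show (c 2 - u * c 0) ^ 2 ≤ (1 - c 0 ^ 2) * √(1 - u ^ 2) ^ 2 by
      rw [hw]; linear_combination h₀₂)
  obtain ⟨b₂, hb₂, hb₂_sq⟩ := exists_mul_eq_and_sq_le (sub_nonneg.2 (hc 1))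
    (show (c 3 - u * c 1) ^ 2 ≤ (1 - c 1 ^ 2) * √(1 - u ^ 2) ^ 2 by
      rw [hw]; linear_combination h₁₃)
  exact ⟨_, posSemidef_Cmat_of_cholesky c hw hb₁ hb₂
    (Real.sq_sqrt (by linarith)) (Real.sq_sqrt (by linarith))⟩

lemma exists_posSemidef_Cmat_iff (c : Fin 4 → ℝ) :
    (∃ u v, (Cmat c u v).PosSemidef) ↔ (∀ i, c i ^ 2 ≤ 1) ∧
      ∃ u, (u - c 0 * c 2) ^ 2 ≤ (1 - c 0 ^ 2) * (1 - c 2 ^ 2) ∧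
        (u - c 1 * c 3) ^ 2 ≤ (1 - c 1 ^ 2) * (1 - c 3 ^ 2) := by
  constructor
  · rintro ⟨u, v, h⟩
    exact ⟨sq_le_one_of_posSemidef_Cmat h, u, sq_sub_mul_le_of_posSemidef_Cmat h⟩
  · rintro ⟨hc, u, h₀₂, h₁₃⟩
    exact ⟨u, exists_posSemidef_Cmat hc h₀₂ h₁₃⟩

lemma exists_sq_sub_mul_le_iff {c : Fin 4 → ℝ} (hc : ∀ i, c i ^ 2 ≤ 1) :
    (∃ u, (u - c 0 * c 2) ^ 2 ≤ (1 - c 0 ^ 2) * (1 - c 2 ^ 2) ∧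
        (u - c 1 * c 3) ^ 2 ≤ (1 - c 1 ^ 2) * (1 - c 3 ^ 2)) ↔
      0 ≤ gpoly c ∨ 0 ≤ hpoly c := by
  have hs : 0 ≤ (1 - c 0 ^ 2) * (1 - c 2 ^ 2) :=
    mul_nonneg (sub_nonneg.2 (hc 0)) (sub_nonneg.2 (hc 2))
  have ht : 0 ≤ (1 - c 1 ^ 2) * (1 - c 3 ^ 2) :=
    mul_nonneg (sub_nonneg.2 (hc 1)) (sub_nonneg.2 (hc 3))
  have hsq : ∀ {x T : ℝ}, 0 ≤ T → (x ^ 2 ≤ T ↔ |x| ≤ √T) := fun hT => by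
    rw [Real.le_sqrt (abs_nonneg _) hT, sq_abs]
  simp_rw [hsq hs, hsq ht]
  rw [exists_abs_sub_le_and_abs_sub_le_iff (Real.sqrt_nonneg _) (Real.sqrt_nonneg _),
    abs_le_sqrt_add_sqrt_iff hs ht]
  have hg : (1 - c 0 ^ 2) * (1 - c 2 ^ 2) + (1 - c 1 ^ 2) * (1 - c 3 ^ 2) -
      (c 0 * c 2 - c 1 * c 3) ^ 2 = gpoly c := by
    unfold gpoly; ring
  rw [hg, hpoly, sub_nonneg]
  ring_nf

theorem stmt0 (c : Fin 4 → ℝ) :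
    (∃ u v : ℝ, (Cmat c u v).PosSemidef) ↔
      (∀ i, c i ∈ Set.Icc (-1 : ℝ) 1) ∧ (0 ≤ gpoly c ∨ 0 ≤ hpoly c) := by
  have hbox : (∀ i, c i ∈ Set.Icc (-1 : ℝ) 1) ↔ ∀ i, c i ^ 2 ≤ 1 := by
    simp only [Set.mem_Icc, ← abs_le, sq_le_one_iff_abs_le_one]
  rw [exists_posSemidef_Cmat_iff, hbox]
  exact and_congr_right exists_sq_sub_mul_le_iff
end

section
/- The quantum correlation body Q equals the convex hull in ℝ⁴ of the set {(cos α, cos β, cos γ, cos δ) : α,β,γ,δ ∈ ℝ with α+β+γ+δ = 0}. -/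
open Real Matrix
open scoped InnerProductSpace ComplexOrder

theorem Matrix.PosSemidef.exists_eq_gram {𝕜 n : Type*} [RCLike 𝕜] [Fintype n]
    {M : Matrix n n 𝕜} (hM : M.PosSemidef) : ∃ v : n → EuclideanSpace 𝕜 n, M = gram 𝕜 v := by
  classical
  open scoped MatrixOrder in
  obtain ⟨B, rfl⟩ := CStarAlgebra.nonneg_iff_eq_star_mul_self.mp hM.nonneg
  refine ⟨fun j ↦ WithLp.toLp 2 fun k ↦ B k j, ?_⟩
  ext i j
  simp [mul_apply, PiLp.inner_apply, mul_comm]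

section Correlations

variable {E : Type*} [NormedAddCommGroup E] [InnerProductSpace ℝ E]

def correlations (a b x y : E) : Fin 4 → ℝ := ![⟪a, x⟫_ℝ, ⟪a, y⟫_ℝ, ⟪b, x⟫_ℝ, ⟪b, y⟫_ℝ]

lemma Cmat_correlations {a b x y : E} (ha : ‖a‖ = 1) (hb : ‖b‖ = 1) (hx : ‖x‖ = 1)
    (hy : ‖y‖ = 1) :
    Cmat (correlations a b x y) ⟪a, b⟫_ℝ ⟪x, y⟫_ℝ = gram ℝ ![a, b, x, y] := by
  ext i j
  fin_cases i <;> fin_cases j <;> simp [Cmat, correlations, ha, hb, hx, hy, real_inner_comm]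

lemma correlations_mem_Qbody {a b x y : E} (ha : ‖a‖ = 1) (hb : ‖b‖ = 1) (hx : ‖x‖ = 1)
    (hy : ‖y‖ = 1) : correlations a b x y ∈ Qbody :=
  ⟨_, _, Cmat_correlations ha hb hx hy ▸ posSemidef_gram ℝ _⟩

lemma convex_setOf_correlations_mem_left {K : Set (Fin 4 → ℝ)} (hK : Convex ℝ K) (a b y : E) :
    Convex ℝ {x | correlations a b x y ∈ K} := by
  intro x₁ h₁ x₂ h₂ s t hs ht hst
  show correlations a b _ _ ∈ K
  convert hK h₁ h₂ hs ht hst using 1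
  ext i
  fin_cases i <;> simp [correlations, inner_add_right, inner_smul_right, ← add_mul, hst]

lemma convex_setOf_correlations_mem_right {K : Set (Fin 4 → ℝ)} (hK : Convex ℝ K) (a b x : E) :
    Convex ℝ {y | correlations a b x y ∈ K} := by
  intro y₁ h₁ y₂ h₂ s t hs ht hst
  show correlations a b _ _ ∈ K
  convert hK h₁ h₂ hs ht hst using 1
  ext i
  fin_cases i <;> simp [correlations, inner_add_right, inner_smul_right, ← add_mul, hst]

lemma correlations_mem_of_mem_convexHull {K : Set (Fin 4 → ℝ)} (hK : Convex ℝ K) {a b : E}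
    {s t : Set E} (hst : ∀ x ∈ s, ∀ y ∈ t, correlations a b x y ∈ K) {x y : E}
    (hx : x ∈ convexHull ℝ s) (hy : y ∈ convexHull ℝ t) : correlations a b x y ∈ K := by
  have hx' : ∀ y ∈ t, correlations a b x y ∈ K := fun y hy ↦
    convexHull_min (fun x hx ↦ hst x hx y hy) (convex_setOf_correlations_mem_left hK a b y) hx
  exact convexHull_min hx' (convex_setOf_correlations_mem_right hK a b x) hy

/-- Cauchy–Schwarz for the components of `b` and `x` orthogonal to `a`. -/
lemma sq_inner_sub_inner_mul_inner_le {a b x : E} (ha : ‖a‖ = 1) (hb : ‖b‖ = 1) (hx : ‖x‖ = 1) :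
    (⟪b, x⟫_ℝ - ⟪a, b⟫_ℝ * ⟪a, x⟫_ℝ) ^ 2 ≤ (1 - ⟪a, b⟫_ℝ ^ 2) * (1 - ⟪a, x⟫_ℝ ^ 2) := by
  have hcs := real_inner_mul_inner_self_le (b - ⟪a, b⟫_ℝ • a) (x - ⟪a, x⟫_ℝ • a)
  simp only [inner_sub_left, inner_sub_right, real_inner_smul_left, real_inner_smul_right,
    real_inner_self_eq_norm_sq, norm_smul, Real.norm_eq_abs, mul_pow, sq_abs, ha, hb, hx,
    real_inner_comm a] at hcs
  linear_combination hcs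

end Correlations

lemma Cmat_smul_add_smul {s t : ℝ} (hst : s + t = 1) (c c' : Fin 4 → ℝ) (u u' v v' : ℝ) :
    Cmat (s • c + t • c') (s * u + t * u') (s * v + t * v') =
      s • Cmat c u v + t • Cmat c' u' v' := by
  ext i j
  fin_cases i <;> fin_cases j <;> simp [Cmat, hst]

lemma convex_Qbody : Convex ℝ Qbody := by
  rintro c ⟨u, v, hc⟩ c' ⟨u', v', hc'⟩ s t hs ht hst
  exact ⟨s * u + t * u', s * v + t * v', Cmat_smul_add_smul hst c c' u u' v v' ▸
    (hc.smul hs).add (hc'.smul ht)⟩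

lemma exists_correlations_eq_of_mem_Qbody {c : Fin 4 → ℝ} (hc : c ∈ Qbody) :
    ∃ a b x y : EuclideanSpace ℝ (Fin 4), ‖a‖ = 1 ∧ ‖b‖ = 1 ∧ ‖x‖ = 1 ∧ ‖y‖ = 1 ∧
      c = correlations a b x y := by
  obtain ⟨u, v, hC⟩ := hc
  obtain ⟨e, he⟩ := hC.exists_eq_gram
  have hentry : ∀ i j, Cmat c u v i j = ⟪e i, e j⟫_ℝ := fun i j ↦ by rw [he, gram_apply]
  have hunit : ∀ i, ‖e i‖ = 1 := fun i ↦ by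
    have h : ‖e i‖ ^ 2 = 1 := by
      rw [← real_inner_self_eq_norm_sq, ← hentry]
      fin_cases i <;> rfl
    exact (pow_eq_one_iff_of_nonneg (norm_nonneg _) two_ne_zero).1 h
  refine ⟨e 0, e 1, e 2, e 3, hunit 0, hunit 1, hunit 2, hunit 3, ?_⟩
  ext i
  fin_cases i
  · simpa [Cmat, correlations] using hentry 0 2
  · simpa [Cmat, correlations] using hentry 0 3
  · simpa [Cmat, correlations] using hentry 1 2
  · simpa [Cmat, correlations] using hentry 1 3

lemma Complex.real_inner_exp_ofReal_mul_I (σ τ : ℝ) :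
    ⟪Complex.exp (σ * Complex.I), Complex.exp (τ * Complex.I)⟫_ℝ = Real.cos (τ - σ) := by
  rw [Complex.inner, ← Complex.exp_conj, ← Complex.exp_add, map_mul, Complex.conj_ofReal,
    Complex.conj_I, ← Complex.exp_ofReal_mul_I_re (τ - σ)]
  push_cast
  ring_nf

lemma Complex.exists_norm_le_one_inner_eq {ζ : ℂ} {p c : ℝ} (hp : p ^ 2 ≤ 1)
    (hc : (c - ζ.re * p) ^ 2 ≤ ζ.im ^ 2 * (1 - p ^ 2)) :
    ∃ z : ℂ, ‖z‖ ≤ 1 ∧ ⟪1, z⟫_ℝ = p ∧ ⟪ζ, z⟫_ℝ = c := by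
  simp only [Complex.inner, map_one, mul_one, Complex.mul_re, Complex.conj_re, Complex.conj_im]
  rcases eq_or_ne ζ.im 0 with him | him
  · refine ⟨p, ?_, by simp, ?_⟩
    · simpa [abs_le, sq_le_one_iff_abs_le_one] using hp
    · rw [him, zero_pow two_ne_zero, zero_mul] at hc
      rw [Complex.ofReal_re, Complex.ofReal_im, zero_mul, sub_zero]
      nlinarith [sq_nonneg (c - ζ.re * p)]
  · refine ⟨⟨p, (c - ζ.re * p) / ζ.im⟩, ?_, rfl, ?_⟩
    · rw [Complex.norm_def, Real.sqrt_le_one, Complex.normSq_mk]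
      have hq : ((c - ζ.re * p) / ζ.im) ^ 2 ≤ 1 - p ^ 2 := by
        rw [div_pow, div_le_iff₀ (by positivity)]
        linarith
      nlinarith [hq]
    · field_simp
      ring

/-- `ζ` is the image of `b` under an isometry of `span {a, b}` into `ℂ` sending `a` to `1`. -/
lemma exists_complex_correlations_eq {E : Type*} [NormedAddCommGroup E] [InnerProductSpace ℝ E]
    {a b x y : E} (ha : ‖a‖ = 1) (hb : ‖b‖ = 1) (hx : ‖x‖ = 1) (hy : ‖y‖ = 1) :
    ∃ ζ z w : ℂ, ‖ζ‖ = 1 ∧ ‖z‖ ≤ 1 ∧ ‖w‖ ≤ 1 ∧ correlations a b x y = correlations 1 ζ z w := by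
  have sq_inner_le_one : ∀ {x : E}, ‖x‖ = 1 → ⟪a, x⟫_ℝ ^ 2 ≤ 1 := fun {x} hx ↦ by
    simpa [sq_le_one_iff_abs_le_one, ha, hx] using abs_real_inner_le_norm a x
  have hab := sq_inner_le_one hb
  set ζ : ℂ := ⟨⟪a, b⟫_ℝ, √(1 - ⟪a, b⟫_ℝ ^ 2)⟩
  have hζim : ζ.im ^ 2 = 1 - ⟪a, b⟫_ℝ ^ 2 := Real.sq_sqrt (by linarith)
  have hζ : ‖ζ‖ = 1 := by
    rw [Complex.norm_def, Complex.normSq_apply, ← sq, ← sq, hζim,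
      show ζ.re = ⟪a, b⟫_ℝ from rfl, add_sub_cancel, Real.sqrt_one]
  obtain ⟨z, hz, hz₁, hzζ⟩ := Complex.exists_norm_le_one_inner_eq (ζ := ζ) (c := ⟪b, x⟫_ℝ)
    (sq_inner_le_one hx) (hζim ▸ sq_inner_sub_inner_mul_inner_le ha hb hx)
  obtain ⟨w, hw, hw₁, hwζ⟩ := Complex.exists_norm_le_one_inner_eq (ζ := ζ) (c := ⟪b, y⟫_ℝ)
    (sq_inner_le_one hy) (hζim ▸ sq_inner_sub_inner_mul_inner_le ha hb hy)
  exact ⟨ζ, z, w, hζ, hz, hw, by simp only [correlations, hz₁, hzζ, hw₁, hwζ]⟩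

def cosineTuples : Set (Fin 4 → ℝ) :=
  {x | ∃ α β γ δ : ℝ, α + β + γ + δ = 0 ∧ x = ![cos α, cos β, cos γ, cos δ]}

lemma mem_cosineTuples_iff {x : Fin 4 → ℝ} :
    x ∈ cosineTuples ↔ ∃ σ₁ σ₂ τ₁ τ₂ : ℝ, x = correlations (Complex.exp (σ₁ * Complex.I))
      (Complex.exp (σ₂ * Complex.I)) (Complex.exp (τ₁ * Complex.I))
      (Complex.exp (τ₂ * Complex.I)) := by
  constructor
  · rintro ⟨α, β, γ, δ, hsum, rfl⟩
    refine ⟨0, α + γ, α, -β, ?_⟩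
    simp only [correlations, Complex.real_inner_exp_ofReal_mul_I]
    rw [show -β - (α + γ) = δ by linarith]
    simp
  · rintro ⟨σ₁, σ₂, τ₁, τ₂, rfl⟩
    simp only [correlations, Complex.real_inner_exp_ofReal_mul_I]
    refine ⟨τ₁ - σ₁, σ₁ - τ₂, σ₂ - τ₁, τ₂ - σ₂, by ring, ?_⟩
    rw [← cos_neg (σ₁ - τ₂), ← cos_neg (σ₂ - τ₁), neg_sub, neg_sub]

lemma correlations_mem_convexHull_cosineTuples {ζ₁ ζ₂ z w : ℂ} (hζ₁ : ‖ζ₁‖ = 1)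
    (hζ₂ : ‖ζ₂‖ = 1) (hz : ‖z‖ ≤ 1) (hw : ‖w‖ ≤ 1) :
    correlations ζ₁ ζ₂ z w ∈ convexHull ℝ cosineTuples := by
  rw [← mem_closedBall_zero_iff, ← convexHull_sphere_eq_closedBall 0 zero_le_one] at hz hw
  refine correlations_mem_of_mem_convexHull (convex_convexHull ℝ _)
    (fun z hz w hw ↦ subset_convexHull ℝ _ ?_) hz hw
  obtain ⟨σ₁, rfl⟩ := (Complex.norm_eq_one_iff ζ₁).1 hζ₁
  obtain ⟨σ₂, rfl⟩ := (Complex.norm_eq_one_iff ζ₂).1 hζ₂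
  obtain ⟨τ₁, rfl⟩ := (Complex.norm_eq_one_iff z).1 (mem_sphere_zero_iff_norm.1 hz)
  obtain ⟨τ₂, rfl⟩ := (Complex.norm_eq_one_iff w).1 (mem_sphere_zero_iff_norm.1 hw)
  exact mem_cosineTuples_iff.2 ⟨σ₁, σ₂, τ₁, τ₂, rfl⟩

theorem stmt1 :
    Qbody = convexHull ℝ {x : Fin 4 → ℝ | ∃ α β γ δ : ℝ, α + β + γ + δ = 0 ∧
      x = ![Real.cos α, Real.cos β, Real.cos γ, Real.cos δ]} := by
  change Qbody = convexHull ℝ cosineTuples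
  refine subset_antisymm (fun c hc ↦ ?_) (convexHull_min (fun c hc ↦ ?_) convex_Qbody)
  · obtain ⟨a, b, x, y, ha, hb, hx, hy, rfl⟩ := exists_correlations_eq_of_mem_Qbody hc
    obtain ⟨ζ, z, w, hζ, hz, hw, h⟩ := exists_complex_correlations_eq ha hb hx hy
    exact h ▸ correlations_mem_convexHull_cosineTuples norm_one hζ hz hw
  · obtain ⟨σ₁, σ₂, τ₁, τ₂, rfl⟩ := mem_cosineTuples_iff.1 hc
    exact correlations_mem_Qbody (Complex.norm_exp_ofReal_mul_I σ₁)
      (Complex.norm_exp_ofReal_mul_I σ₂) (Complex.norm_exp_ofReal_mul_I τ₁)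
      (Complex.norm_exp_ofReal_mul_I τ₂)
end

section
/- Let f = (f₁₁,f₁₂,f₂₁,f₂₂) ∈ ℝ⁴ satisfy p(f) ≥ 0 or m(f) ≤ 2, where p(f) := f₁₁f₁₂f₂₁f₂₂ and m(f) := (min_{i,j} |f_{ij}|) · (Σ_{i,j} |f_{ij}|⁻¹). Then sup { f·c : c ∈ Q } = φ_𝒞(f), where φ_𝒞(f) := max{ |f₁₁+f₁₂+f₂₁+f₂₂|, |f₁₁+f₁₂−f₂₁−f₂₂|, |f₁₁−f₁₂+f₂₁−f₂₂|, |f₁₁−f₁₂−f₂₁+f₂₂| } is the support function of the classical polytope, and f·c denotes Σ_{i,j} f_{ij} c_{ij}. -/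
/-- `p(f) = f₁₁ f₁₂ f₂₁ f₂₂`. -/
def ppoly (f : Fin 4 → ℝ) : ℝ := f 0 * f 1 * f 2 * f 3

/-- `m(f) = (min |f_ij|) · Σ |f_ij|⁻¹`. -/
noncomputable def mfun (f : Fin 4 → ℝ) : ℝ :=
  (min (min |f 0| |f 1|) (min |f 2| |f 3|)) * (∑ i, |f i|⁻¹)

/-- The support function of the classical polytope. -/
def phiC (f : Fin 4 → ℝ) : ℝ :=
  max (max |f 0 + f 1 + f 2 + f 3| |f 0 + f 1 - f 2 - f 3|)
      (max |f 0 - f 1 + f 2 - f 3| |f 0 - f 1 - f 2 + f 3|)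

-- The tangent-line bound `√(x² + 2m) ≤ x + m / x`, cleared of denominators.
lemma mul_le_sq_add_of_sq_le_sq_add_two_mul {x s m : ℝ} (hm : 0 ≤ x ^ 2 + m)
    (h : s ^ 2 ≤ x ^ 2 + 2 * m) : x * s ≤ x ^ 2 + m := by
  have hsq : (x * s) ^ 2 ≤ (x ^ 2 + m) ^ 2 := by
    nlinarith [mul_le_mul_of_nonneg_left h (sq_nonneg x), sq_nonneg m]
  exact (abs_le_of_sq_le_sq hsq hm).trans' (le_abs_self _)

-- Add the tangent lines at `w = 1` of `√(a² + b² + 2abw)` and `√(c² + d² - 2cdw)`;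
-- `hcd` says that the slope of the sum is nonnegative.
lemma add_le_of_sq_le_of_mul_le {a b c d w s r : ℝ} (ha : 0 < a) (hb : 0 < b) (hc : 0 < c)
    (hd : 0 < d) (hw : |w| ≤ 1)
    (hs : s ^ 2 ≤ a ^ 2 + b ^ 2 + 2 * a * b * w) (hr : r ^ 2 ≤ c ^ 2 + d ^ 2 - 2 * c * d * w)
    (hcd : c * d * (a + b) ≤ a * b * (c - d)) : s + r ≤ a + b + (c - d) := by
  obtain ⟨hw₁, hw₂⟩ := abs_le.mp hw
  have hab : 0 < a + b := by positivity
  have hcd_pos : 0 < c - d := by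
    by_contra! h
    nlinarith [mul_pos (mul_pos hc hd) hab, mul_pos ha hb]
  have hs_tangent : (a + b) * s ≤ (a + b) ^ 2 + a * b * (w - 1) :=
    mul_le_sq_add_of_sq_le_sq_add_two_mul (by nlinarith [sq_nonneg a, sq_nonneg b, mul_pos ha hb])
      (by linarith)
  have hr_tangent : (c - d) * r ≤ (c - d) ^ 2 - c * d * (w - 1) :=
    mul_le_sq_add_of_sq_le_sq_add_two_mul (by nlinarith [mul_pos hc hd]) (by linarith)
  have hsum : (a + b) * (c - d) * (s + r) ≤ (a + b) * (c - d) * (a + b + (c - d)) := by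
    nlinarith [mul_le_mul_of_nonneg_left hs_tangent hcd_pos.le,
      mul_le_mul_of_nonneg_left hr_tangent hab.le,
      mul_nonneg (sub_nonneg.mpr hw₂) (sub_nonneg.mpr hcd)]
  exact le_of_mul_le_mul_left hsum (mul_pos hab hcd_pos)

lemma mul_le_mul_sub_of_mul_sum_inv_le_two {a b c d : ℝ} (ha : 0 < a) (hb : 0 < b) (hc : 0 < c)
    (hd : 0 < d) (h : d * (a⁻¹ + b⁻¹ + c⁻¹ + d⁻¹) ≤ 2) : c * d * (a + b) ≤ a * b * (c - d) := by
  have e : d * (a⁻¹ + b⁻¹ + c⁻¹ + d⁻¹) = (c * d * (a + b) + a * b * d) / (a * b * c) + 1 := by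
    field_simp
    ring
  rw [e, ← le_sub_iff_add_le, div_le_iff₀ (by positivity)] at h
  linarith

lemma add_le_sum_sub_two_mul_min {a b c d w s r : ℝ} (ha : 0 < a) (hb : 0 < b) (hc : 0 < c)
    (hd : 0 < d) (hw : |w| ≤ 1)
    (hs : s ^ 2 ≤ a ^ 2 + b ^ 2 + 2 * a * b * w) (hr : r ^ 2 ≤ c ^ 2 + d ^ 2 - 2 * c * d * w)
    (hm : min (min a b) (min c d) * (a⁻¹ + b⁻¹ + c⁻¹ + d⁻¹) ≤ 2) :
    s + r ≤ a + b + c + d - 2 * min (min a b) (min c d) := by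
  wlog hcd : min c d ≤ min a b generalizing a b c d s r w
  · have hw' : |-w| ≤ 1 := by rwa [abs_neg]
    have := this (s := r) (r := s) hc hd ha hb hw' (by linarith) (by linarith)
      (by rw [min_comm]; convert hm using 2; ring) (le_of_not_ge hcd)
    rw [min_comm (min a b)]
    linarith
  wlog hdc : d ≤ c generalizing c d r
  · have := this (r := r) hd hc (by linarith) (by rw [min_comm d c]; convert hm using 2; ring)
      (by rwa [min_comm]) (le_of_not_ge hdc)
    rw [min_comm c d]
    linarith
  rw [min_eq_right hcd, min_eq_right hdc] at hm ⊢
  linarith [add_le_of_sq_le_of_mul_le ha hb hc hd hw hs hr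
    (mul_le_mul_sub_of_mul_sum_inv_le_two ha hb hc hd hm)]

lemma abs_add_abs_le_of_abs_add_le_of_abs_sub_le {x y M : ℝ} (h₁ : |x + y| ≤ M)
    (h₂ : |x - y| ≤ M) : |x| + |y| ≤ M := by
  obtain ⟨h₁l, h₁r⟩ := abs_le.mp h₁
  obtain ⟨h₂l, h₂r⟩ := abs_le.mp h₂
  rcases abs_choice x with hx | hx <;> rcases abs_choice y with hy | hy <;> linarith

lemma abs_add_of_mul_nonneg {x y : ℝ} (h : 0 ≤ x * y) : |x + y| = |x| + |y| :=
  (abs_add_eq_add_abs_iff x y).mpr (mul_nonneg_iff.mp h)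

lemma abs_sub_of_mul_nonpos {x y : ℝ} (h : x * y ≤ 0) : |x - y| = |x| + |y| := by
  rw [sub_eq_add_neg, abs_add_of_mul_nonneg (by linarith [mul_neg x y]), abs_neg]

lemma sum_mul_le_sum_abs {ι : Type*} [Fintype ι] (f c : ι → ℝ) (hc : ∀ i, |c i| ≤ 1) :
    ∑ i, f i * c i ≤ ∑ i, |f i| :=
  Finset.sum_le_sum fun i _ => calc
    f i * c i ≤ |f i| * |c i| := (le_abs_self _).trans (abs_mul _ _).le
    _ ≤ |f i| := mul_le_of_le_one_right (abs_nonneg _) (hc i)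

lemma abs_le_phiC (f : Fin 4 → ℝ) :
    |f 0 + f 1 + f 2 + f 3| ≤ phiC f ∧ |f 0 + f 1 - f 2 - f 3| ≤ phiC f ∧
    |f 0 - f 1 + f 2 - f 3| ≤ phiC f ∧ |f 0 - f 1 - f 2 + f 3| ≤ phiC f := by
  unfold phiC
  exact ⟨le_max_of_le_left (le_max_left _ _), le_max_of_le_left (le_max_right _ _),
    le_max_of_le_right (le_max_left _ _), le_max_of_le_right (le_max_right _ _)⟩

lemma sum_abs_le_phiC_of_ppoly_nonneg {f : Fin 4 → ℝ} (hp : 0 ≤ ppoly f) :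
    ∑ i, |f i| ≤ phiC f := by
  obtain ⟨h₁, h₂, h₃, h₄⟩ := abs_le_phiC f
  have hplus : |f 0 + f 1| + |f 2 + f 3| ≤ phiC f :=
    abs_add_abs_le_of_abs_add_le_of_abs_sub_le (by convert h₁ using 2; ring)
      (by convert h₂ using 2; ring)
  have hminus : |f 0 - f 1| + |f 2 - f 3| ≤ phiC f :=
    abs_add_abs_le_of_abs_add_le_of_abs_sub_le (by convert h₃ using 2; ring)
      (by convert h₄ using 2; ring)
  rw [Fin.sum_univ_four]
  have hpairs : 0 ≤ (f 0 * f 1) * (f 2 * f 3) := by rw [← mul_assoc]; exact hp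
  rcases mul_nonneg_iff.mp hpairs with ⟨h01, h23⟩ | ⟨h01, h23⟩
  · rw [abs_add_of_mul_nonneg h01, abs_add_of_mul_nonneg h23] at hplus
    linarith
  · rw [abs_sub_of_mul_nonpos h01, abs_sub_of_mul_nonpos h23] at hminus
    linarith

lemma sum_abs_sub_two_mul_min_le_phiC (f : Fin 4 → ℝ) :
    ∑ i, |f i| - 2 * min (min |f 0| |f 1|) (min |f 2| |f 3|) ≤ phiC f := by
  obtain ⟨h₁, h₂, h₃, h₄⟩ := abs_le_phiC f
  rw [Fin.sum_univ_four]
  set t := (|f 0| + |f 1| + |f 2| + |f 3| - phiC f) / 2 with ht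
  suffices t ≤ |f 0| ∧ t ≤ |f 1| ∧ t ≤ |f 2| ∧ t ≤ |f 3| by
    obtain ⟨t0, t1, t2, t3⟩ := this
    linarith [le_min (le_min t0 t1) (le_min t2 t3)]
  rcases abs_choice (f 0) with h0 | h0 <;> rcases abs_choice (f 1) with h1 | h1 <;>
    rcases abs_choice (f 2) with h2 | h2 <;> rcases abs_choice (f 3) with h3 | h3 <;>
    refine ⟨?_, ?_, ?_, ?_⟩ <;>
    linarith [le_abs_self (f 0 + f 1 + f 2 + f 3), neg_abs_le (f 0 + f 1 + f 2 + f 3),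
      le_abs_self (f 0 + f 1 - f 2 - f 3), neg_abs_le (f 0 + f 1 - f 2 - f 3),
      le_abs_self (f 0 - f 1 + f 2 - f 3), neg_abs_le (f 0 - f 1 + f 2 - f 3),
      le_abs_self (f 0 - f 1 - f 2 + f 3), neg_abs_le (f 0 - f 1 - f 2 + f 3),
      abs_nonneg (f 0), abs_nonneg (f 1), abs_nonneg (f 2), abs_nonneg (f 3)]

lemma quadratic_nonneg_of_posSemidef_Cmat {c : Fin 4 → ℝ} {u v : ℝ} (hC : (Cmat c u v).PosSemidef)
    (x₀ x₁ x₂ x₃ : ℝ) :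
    0 ≤ x₀ ^ 2 + x₁ ^ 2 + x₂ ^ 2 + x₃ ^ 2 + 2 * (x₀ * x₁ * u + x₀ * x₂ * c 0 + x₀ * x₃ * c 1
      + x₁ * x₂ * c 2 + x₁ * x₃ * c 3 + x₂ * x₃ * v) := by
  have h := hC.dotProduct_mulVec_nonneg ![x₀, x₁, x₂, x₃]
  simp [Cmat, Matrix.mulVec, dotProduct, Fin.sum_univ_four] at h
  linarith

lemma abs_le_one_of_mem_Qbody {c : Fin 4 → ℝ} (hc : c ∈ Qbody) (i : Fin 4) : |c i| ≤ 1 := by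
  obtain ⟨u, v, hC⟩ := hc
  have q := quadratic_nonneg_of_posSemidef_Cmat hC
  rw [abs_le]
  match i with
  | 0 => constructor <;> linarith [q 1 0 1 0, q 1 0 (-1) 0]
  | 1 => constructor <;> linarith [q 1 0 0 1, q 1 0 0 (-1)]
  | 2 => constructor <;> linarith [q 0 1 1 0, q 0 1 (-1) 0]
  | 3 => constructor <;> linarith [q 0 1 0 1, q 0 1 0 (-1)]

-- Cauchy–Schwarz: `α c₁₁ + β c₁₂ = ⟨x₁, α y₁ + β y₂⟩` and `‖α y₁ + β y₂‖² = α² + β² + 2αβv`.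
lemma sq_le_of_posSemidef_Cmat {c : Fin 4 → ℝ} {u v : ℝ} (hC : (Cmat c u v).PosSemidef) (α β : ℝ) :
    (α * c 0 + β * c 1) ^ 2 ≤ α ^ 2 + β ^ 2 + 2 * (α * β * v) ∧
      (α * c 2 + β * c 3) ^ 2 ≤ α ^ 2 + β ^ 2 + 2 * (α * β * v) := by
  have q := quadratic_nonneg_of_posSemidef_Cmat hC
  constructor
  · linarith [q (α * c 0 + β * c 1) 0 (-α) (-β)]
  · linarith [q 0 (α * c 2 + β * c 3) (-α) (-β)]

lemma abs_le_one_of_posSemidef_Cmat {c : Fin 4 → ℝ} {u v : ℝ} (hC : (Cmat c u v).PosSemidef) :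
    |v| ≤ 1 := by
  have q := quadratic_nonneg_of_posSemidef_Cmat hC
  rw [abs_le]
  constructor <;> linarith [q 0 0 1 1, q 0 0 1 (-1)]

lemma exists_abs_le_one_of_mul_neg {x y v : ℝ} (hxy : x * y < 0) (hv : |v| ≤ 1) :
    ∃ w, |w| ≤ 1 ∧ x * v = |x| * w ∧ y * v = -(|y| * w) := by
  rcases mul_neg_iff.mp hxy with ⟨hx, hy⟩ | ⟨hx, hy⟩
  · exact ⟨v, hv, by rw [abs_of_pos hx], by rw [abs_of_neg hy]; ring⟩
  · exact ⟨-v, by rwa [abs_neg], by rw [abs_of_neg hx]; ring, by rw [abs_of_pos hy]; ring⟩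

lemma sum_mul_le_phiC_of_ppoly_neg {f c : Fin 4 → ℝ} (hp : ppoly f < 0) (hm : mfun f ≤ 2)
    (hc : c ∈ Qbody) : ∑ i, f i * c i ≤ phiC f := by
  obtain ⟨u, v, hC⟩ := hc
  have hpairs : (f 0 * f 1) * (f 2 * f 3) < 0 := by rw [← mul_assoc]; exact hp
  obtain ⟨⟨⟨h0, h1⟩, h2⟩, h3⟩ : ((f 0 ≠ 0 ∧ f 1 ≠ 0) ∧ f 2 ≠ 0) ∧ f 3 ≠ 0 := by
    simpa only [ppoly, mul_ne_zero_iff] using hp.ne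
  obtain ⟨w, hw, h01, h23⟩ := exists_abs_le_one_of_mul_neg hpairs (abs_le_one_of_posSemidef_Cmat hC)
  have hs := (sq_le_of_posSemidef_Cmat hC (f 0) (f 1)).1
  have hr := (sq_le_of_posSemidef_Cmat hC (f 2) (f 3)).2
  rw [h01, abs_mul, ← sq_abs (f 0), ← sq_abs (f 1), ← sq_abs (f 0 * c 0 + f 1 * c 1)] at hs
  rw [h23, abs_mul, ← sq_abs (f 2), ← sq_abs (f 3), ← sq_abs (f 2 * c 2 + f 3 * c 3)] at hr
  have key := add_le_sum_sub_two_mul_min (s := |f 0 * c 0 + f 1 * c 1|)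
    (r := |f 2 * c 2 + f 3 * c 3|) (abs_pos.mpr h0) (abs_pos.mpr h1)
    (abs_pos.mpr h2) (abs_pos.mpr h3) hw
    (by linarith) (by linarith) (by simpa [mfun, Fin.sum_univ_four] using hm)
  calc ∑ i, f i * c i = (f 0 * c 0 + f 1 * c 1) + (f 2 * c 2 + f 3 * c 3) := by
        rw [Fin.sum_univ_four]; ring
    _ ≤ |f 0 * c 0 + f 1 * c 1| + |f 2 * c 2 + f 3 * c 3| :=
        add_le_add (le_abs_self _) (le_abs_self _)
    _ ≤ ∑ i, |f i| - 2 * min (min |f 0| |f 1|) (min |f 2| |f 3|) := by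
        rw [Fin.sum_univ_four]; exact key
    _ ≤ phiC f := sum_abs_sub_two_mul_min_le_phiC f

lemma sum_mul_le_phiC {f c : Fin 4 → ℝ} (h : 0 ≤ ppoly f ∨ mfun f ≤ 2) (hc : c ∈ Qbody) :
    ∑ i, f i * c i ≤ phiC f := by
  rcases le_or_gt 0 (ppoly f) with hp | hp
  · exact (sum_mul_le_sum_abs f c (abs_le_one_of_mem_Qbody hc)).trans
      (sum_abs_le_phiC_of_ppoly_nonneg hp)
  · exact sum_mul_le_phiC_of_ppoly_neg hp (h.resolve_left hp.not_ge) hc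

lemma mem_Qbody_of_sq_eq_one {z₀ z₁ z₂ z₃ : ℝ} (h₀ : z₀ ^ 2 = 1) (h₁ : z₁ ^ 2 = 1)
    (h₂ : z₂ ^ 2 = 1) (h₃ : z₃ ^ 2 = 1) :
    ![z₀ * z₂, z₀ * z₃, z₁ * z₂, z₁ * z₃] ∈ Qbody := by
  refine ⟨z₀ * z₁, z₂ * z₃, ?_⟩
  have hrank : Cmat ![z₀ * z₂, z₀ * z₃, z₁ * z₂, z₁ * z₃] (z₀ * z₁) (z₂ * z₃)
      = Matrix.vecMulVec ![z₀, z₁, z₂, z₃] (star ![z₀, z₁, z₂, z₃]) := by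
    rw [sq] at h₀ h₁ h₂ h₃
    ext i j
    fin_cases i <;> fin_cases j <;> simp [Cmat, Matrix.vecMulVec, h₀, h₁, h₂, h₃, mul_comm]
  rw [hrank]
  exact Matrix.posSemidef_vecMulVec_self_star _

lemma abs_le_sSup_of_sq_eq_one (f : Fin 4 → ℝ)
    (hS : BddAbove ((fun c : Fin 4 → ℝ => ∑ i, f i * c i) '' Qbody)) (s t : ℝ)
    (hs : s ^ 2 = 1) (ht : t ^ 2 = 1) :
    |f 0 + t * f 1 + s * f 2 + s * t * f 3|
      ≤ sSup ((fun c : Fin 4 → ℝ => ∑ i, f i * c i) '' Qbody) := by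
  have ht' : (-t) ^ 2 = 1 := by rwa [neg_sq]
  refine abs_le'.mpr ⟨le_csSup hS ⟨_, mem_Qbody_of_sq_eq_one (one_pow 2) hs (one_pow 2) ht, ?_⟩,
    le_csSup hS ⟨_, mem_Qbody_of_sq_eq_one (one_pow 2) hs neg_one_sq ht', ?_⟩⟩ <;>
  · simp only [Fin.sum_univ_four, Matrix.cons_val]
    ring

theorem stmt5 (f : Fin 4 → ℝ) (h : 0 ≤ ppoly f ∨ mfun f ≤ 2) :
    sSup ((fun c : Fin 4 → ℝ => ∑ i, f i * c i) '' Qbody) = phiC f := by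
  have hupper : ∀ y ∈ (fun c : Fin 4 → ℝ => ∑ i, f i * c i) '' Qbody, y ≤ phiC f := by
    rintro _ ⟨c, hc, rfl⟩
    exact sum_mul_le_phiC h hc
  have hvertex := abs_le_sSup_of_sq_eq_one f ⟨_, hupper⟩
  refine le_antisymm (csSup_le ⟨_, Set.mem_image_of_mem _
    (mem_Qbody_of_sq_eq_one (one_pow 2) (one_pow 2) (one_pow 2) (one_pow 2))⟩ hupper) ?_
  refine max_le (max_le ?_ ?_) (max_le ?_ ?_)
  · exact (hvertex 1 1 (one_pow 2) (one_pow 2)).trans_eq' (by congr 1; ring)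
  · exact (hvertex (-1) 1 neg_one_sq (one_pow 2)).trans_eq' (by congr 1; ring)
  · exact (hvertex 1 (-1) (one_pow 2) neg_one_sq).trans_eq' (by congr 1; ring)
  · exact (hvertex (-1) (-1) neg_one_sq neg_one_sq).trans_eq' (by congr 1; ring)
end

section
/- Let α, β, γ, δ ∈ ℝ satisfy α+β+γ+δ = 0 and sin α · sin β · sin γ · sin δ < 0, and set c := (cos α, cos β, cos γ, cos δ). Then c is an extreme point of the quantum correlation body Q. -/
/-!
Put `e θ = (cos θ, sin θ)`. The point `c = (cos α, cos β, cos γ, cos δ)` lies in `Q` because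
`C(c, cos (α + γ), cos (α + β))` is the Gram matrix of `e 0, e (α + γ), e α, e (-β)`. Linear
relations among three unit vectors in the plane give two test vectors `ξ, η`, whose entries at the
`u`-positions of `C` multiply to `0`. For every completion, `ξᵀ C(c, u, v) ξ = 2 sin α sin β (v - cos (α + β))`
and `ηᵀ C(c, u, v) η = 2 sin γ sin δ (v - cos (α + β))`; the coefficients have opposite signs, so
positivity forces `v = cos (α + β)` and `C ξ = C η = 0`. If `c = t c₁ + s c₂` with `c₁, c₂ ∈ Q`,
averaging their completions gives a completion of `c`, so `ξ, η` are also in the kernel of the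
completion of `c₁`. These kernel equations determine `c₁ = c`, as the sign condition keeps all
the sines involved (including `sin (α + β)`) away from `0`.
-/

open Matrix Real
open scoped ComplexOrder

lemma sin_add_mul_cos (x y : ℝ) : sin (x + y) * cos x = sin y + sin x * cos (x + y) := by
  rw [sin_add, cos_add]
  linear_combination sin y * sin_sq_add_cos_sq x

lemma sin_add_sq (x y : ℝ) :
    sin (x + y) ^ 2 = sin x ^ 2 + sin y ^ 2 + 2 * sin x * sin y * cos (x + y) := by
  have hx := sin_add_mul_cos x y
  have hy := sin_add_mul_cos y x
  rw [add_comm y x] at hy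
  linear_combination sin (x + y) * sin_add x y + sin y * hx + sin x * hy

lemma Matrix.PosSemidef.mulVec_eq_zero_of_add {𝕜 n : Type*} [RCLike 𝕜] [Fintype n]
    {A B : Matrix n n 𝕜} (hA : A.PosSemidef) (hB : B.PosSemidef) {x : n → 𝕜}
    (h : (A + B) *ᵥ x = 0) : A *ᵥ x = 0 := by
  rw [← hA.dotProduct_mulVec_zero_iff]
  have hsum : star x ⬝ᵥ A *ᵥ x + star x ⬝ᵥ B *ᵥ x = 0 := by
    rw [← dotProduct_add, ← add_mulVec, h, dotProduct_zero]
  exact ((add_eq_zero_iff_of_nonneg (hA.dotProduct_mulVec_nonneg x)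
    (hB.dotProduct_mulVec_nonneg x)).mp hsum).1

lemma Cmat_mulVec (c : Fin 4 → ℝ) (u v w x y z : ℝ) :
    Cmat c u v *ᵥ ![w, x, y, z] =
      ![w + u * x + c 0 * y + c 1 * z, u * w + x + c 2 * y + c 3 * z,
        c 0 * w + c 2 * x + y + v * z, c 1 * w + c 3 * x + v * y + z] := by
  ext i
  fin_cases i <;> simp [Cmat, mulVec, dotProduct, Fin.sum_univ_four]

lemma star_dotProduct_Cmat_mulVec (c : Fin 4 → ℝ) (u v w x y z : ℝ) :
    star ![w, x, y, z] ⬝ᵥ Cmat c u v *ᵥ ![w, x, y, z] =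
      w ^ 2 + x ^ 2 + y ^ 2 + z ^ 2 + 2 * u * w * x + 2 * c 0 * w * y + 2 * c 1 * w * z
        + 2 * c 2 * x * y + 2 * c 3 * x * z + 2 * v * y * z := by
  rw [Cmat_mulVec, star_trivial]
  simp only [cons_dotProduct_cons, dotProduct_of_isEmpty]
  ring

lemma Cmat_convexCombination (c₁ c₂ : Fin 4 → ℝ) (u₁ u₂ v₁ v₂ t s : ℝ) (hts : t + s = 1) :
    Cmat (t • c₁ + s • c₂) (t * u₁ + s * u₂) (t * v₁ + s * v₂) =
      t • Cmat c₁ u₁ v₁ + s • Cmat c₂ u₂ v₂ := by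
  ext i j
  fin_cases i <;> fin_cases j <;> simp [Cmat, hts]

/-- Coefficients of `sin (x + y) • e 0 = sin y • e x + sin x • e (-y)`, placed on the rows `0, 2, 3`
(for `kerVec₁`) or `1, 2, 3` (for `kerVec₂`) of a Gram matrix. -/
noncomputable def kerVec₁ (x y : ℝ) : Fin 4 → ℝ := ![sin (x + y), 0, -sin y, -sin x]

noncomputable def kerVec₂ (x y : ℝ) : Fin 4 → ℝ := ![0, sin (x + y), -sin y, -sin x]

lemma star_kerVec₁_dotProduct_Cmat_mulVec {c : Fin 4 → ℝ} {x y : ℝ} (hx : c 0 = cos x)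
    (hy : c 1 = cos y) (u v : ℝ) :
    star (kerVec₁ x y) ⬝ᵥ Cmat c u v *ᵥ kerVec₁ x y = 2 * sin x * sin y * (v - cos (x + y)) := by
  have hxy := sin_add_mul_cos x y
  have hyx := sin_add_mul_cos y x
  rw [add_comm y x] at hyx
  rw [kerVec₁, star_dotProduct_Cmat_mulVec, hx, hy]
  linear_combination sin_add_sq x y - 2 * sin y * hxy - 2 * sin x * hyx

lemma star_kerVec₂_dotProduct_Cmat_mulVec {c : Fin 4 → ℝ} {x y : ℝ} (hx : c 2 = cos x)
    (hy : c 3 = cos y) (u v : ℝ) :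
    star (kerVec₂ x y) ⬝ᵥ Cmat c u v *ᵥ kerVec₂ x y = 2 * sin x * sin y * (v - cos (x + y)) := by
  have hxy := sin_add_mul_cos x y
  have hyx := sin_add_mul_cos y x
  rw [add_comm y x] at hyx
  rw [kerVec₂, star_dotProduct_Cmat_mulVec, hx, hy]
  linear_combination sin_add_sq x y - 2 * sin y * hxy - 2 * sin x * hyx

lemma eq_cos_of_kernel_relations {x y p q v : ℝ} (hS : sin (x + y) ≠ 0) (hx : sin x ≠ 0)
    (hy : sin y ≠ 0) (h₀ : sin (x + y) = sin y * p + sin x * q)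
    (h₁ : p * sin (x + y) = sin y + v * sin x) (h₂ : q * sin (x + y) = v * sin y + sin x) :
    p = cos x ∧ q = cos y ∧ v = cos (x + y) := by
  have hxy := sin_add_mul_cos x y
  have hyx := sin_add_mul_cos y x
  rw [add_comm y x] at hyx
  have hv : v = cos (x + y) := by
    have h : 2 * sin x * sin y * (v - cos (x + y)) = 0 := by
      linear_combination sin_add_sq x y - sin (x + y) * h₀ - sin y * h₁ - sin x * h₂
    simpa [hx, hy, sub_eq_zero] using h
  refine ⟨mul_right_cancel₀ hS ?_, mul_right_cancel₀ hS ?_, hv⟩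
  · linear_combination h₁ + sin x * hv - hxy
  · linear_combination h₂ + sin y * hv - hyx

lemma eq_cos_of_Cmat_mulVec_kerVec₁ {c : Fin 4 → ℝ} {u v x y : ℝ} (hS : sin (x + y) ≠ 0)
    (hx : sin x ≠ 0) (hy : sin y ≠ 0) (h : Cmat c u v *ᵥ kerVec₁ x y = 0) :
    c 0 = cos x ∧ c 1 = cos y ∧ v = cos (x + y) := by
  rw [kerVec₁, Cmat_mulVec] at h
  simp only [cons_eq_zero_iff] at h
  obtain ⟨h₀, -, h₁, h₂, -⟩ := h
  exact eq_cos_of_kernel_relations hS hx hy (by linear_combination h₀) (by linear_combination h₁)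
    (by linear_combination h₂)

lemma eq_cos_of_Cmat_mulVec_kerVec₂ {c : Fin 4 → ℝ} {u v x y : ℝ} (hS : sin (x + y) ≠ 0)
    (hx : sin x ≠ 0) (hy : sin y ≠ 0) (h : Cmat c u v *ᵥ kerVec₂ x y = 0) :
    c 2 = cos x ∧ c 3 = cos y ∧ v = cos (x + y) := by
  rw [kerVec₂, Cmat_mulVec] at h
  simp only [cons_eq_zero_iff] at h
  obtain ⟨-, h₀, h₁, h₂, -⟩ := h
  exact eq_cos_of_kernel_relations hS hx hy (by linear_combination h₀) (by linear_combination h₁)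
    (by linear_combination h₂)

section Configuration

variable {α β γ δ : ℝ}

lemma sin_add_ne_zero_of_sin_mul_neg (hsum : α + β + γ + δ = 0)
    (hneg : sin α * sin β * sin γ * sin δ < 0) : sin (α + β) ≠ 0 := by
  intro hT
  have hαβ := sin_add_mul_cos α β
  have hγδ := sin_add_mul_cos γ δ
  rw [show γ + δ = -(α + β) by linarith, sin_neg, cos_neg, hT] at hγδ
  rw [hT] at hαβ
  have hsq : sin α * sin β * sin γ * sin δ = (sin α * sin γ * cos (α + β)) ^ 2 := by
    linear_combination (-(sin α * sin γ * sin δ)) * hαβ + sin α ^ 2 * sin γ * cos (α + β) * hγδ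
  linarith [sq_nonneg (sin α * sin γ * cos (α + β))]

lemma Cmat_mulVec_kerVec_eq_zero_of_posSemidef (hsum : α + β + γ + δ = 0)
    (hneg : sin α * sin β * sin γ * sin δ < 0) {u v : ℝ}
    (h : (Cmat ![cos α, cos β, cos γ, cos δ] u v).PosSemidef) :
    Cmat ![cos α, cos β, cos γ, cos δ] u v *ᵥ kerVec₁ α β = 0 ∧
      Cmat ![cos α, cos β, cos γ, cos δ] u v *ᵥ kerVec₂ γ δ = 0 := by
  have hαβ := h.dotProduct_mulVec_nonneg (kerVec₁ α β)
  have hγδ := h.dotProduct_mulVec_nonneg (kerVec₂ γ δ)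
  rw [star_kerVec₁_dotProduct_Cmat_mulVec rfl rfl] at hαβ
  rw [star_kerVec₂_dotProduct_Cmat_mulVec rfl rfl,
    show γ + δ = -(α + β) by linarith, cos_neg] at hγδ
  have hv : v = cos (α + β) := by
    have h4 : 0 ≤ sin α * sin β * sin γ * sin δ * (v - cos (α + β)) ^ 2 := by
      linarith [mul_nonneg hαβ hγδ]
    have hsq := le_antisymm (nonpos_of_mul_nonneg_right h4 hneg) (sq_nonneg _)
    exact sub_eq_zero.mp (pow_eq_zero_iff two_ne_zero |>.mp hsq)
  rw [← h.dotProduct_mulVec_zero_iff, ← h.dotProduct_mulVec_zero_iff,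
    star_kerVec₁_dotProduct_Cmat_mulVec rfl rfl, star_kerVec₂_dotProduct_Cmat_mulVec rfl rfl,
    show γ + δ = -(α + β) by linarith, cos_neg, hv]
  simp

lemma eq_of_Cmat_mulVec_kerVec_eq_zero (hsum : α + β + γ + δ = 0)
    (hneg : sin α * sin β * sin γ * sin δ < 0) {c : Fin 4 → ℝ} {u v : ℝ}
    (h₁ : Cmat c u v *ᵥ kerVec₁ α β = 0) (h₂ : Cmat c u v *ᵥ kerVec₂ γ δ = 0) :
    c = ![cos α, cos β, cos γ, cos δ] := by
  have hsin := hneg.ne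
  simp only [ne_eq, mul_eq_zero, not_or] at hsin
  obtain ⟨⟨⟨hα, hβ⟩, hγ⟩, hδ⟩ := hsin
  have hαβ := sin_add_ne_zero_of_sin_mul_neg hsum hneg
  have hγδ : sin (γ + δ) ≠ 0 := by
    rwa [show γ + δ = -(α + β) by linarith, sin_neg, neg_ne_zero]
  obtain ⟨h0, h1, -⟩ := eq_cos_of_Cmat_mulVec_kerVec₁ hαβ hα hβ h₁
  obtain ⟨h2, h3, -⟩ := eq_cos_of_Cmat_mulVec_kerVec₂ hγδ hγ hδ h₂
  ext i
  fin_cases i <;> simp [h0, h1, h2, h3]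

lemma cos_mem_Qbody (hsum : α + β + γ + δ = 0) : ![cos α, cos β, cos γ, cos δ] ∈ Qbody := by
  let θ : Fin 4 → ℝ := ![0, α + γ, α, -β]
  let L : Matrix (Fin 2) (Fin 4) ℝ := Matrix.of ![fun j => cos (θ j), fun j => sin (θ j)]
  have hL : ∀ i j, (Lᴴ * L) i j = cos (θ i - θ j) := by
    intro i j
    simp [L, mul_apply, Fin.sum_univ_two, cos_sub]
  refine ⟨cos (α + γ), cos (α + β), ?_⟩
  convert posSemidef_conjTranspose_mul_self L using 1
  ext i j
  rw [hL]
  fin_cases i <;> fin_cases j <;> simp [Cmat, θ]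
  all_goals first | congr 1; linarith | rw [← cos_neg]; congr 1; linarith

end Configuration

theorem stmt8 (α β γ δ : ℝ) (hsum : α + β + γ + δ = 0)
    (hneg : Real.sin α * Real.sin β * Real.sin γ * Real.sin δ < 0) :
    ![Real.cos α, Real.cos β, Real.cos γ, Real.cos δ] ∈ Set.extremePoints ℝ Qbody := by
  refine ⟨cos_mem_Qbody hsum, ?_⟩
  rintro c₁ ⟨u₁, v₁, h₁⟩ c₂ ⟨u₂, v₂, h₂⟩ ⟨t, s, ht, hs, hts, hc⟩
  have hC := Cmat_convexCombination c₁ c₂ u₁ u₂ v₁ v₂ t s hts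
  rw [hc] at hC
  have hker : ∀ w, (t • Cmat c₁ u₁ v₁ + s • Cmat c₂ u₂ v₂) *ᵥ w = 0 → Cmat c₁ u₁ v₁ *ᵥ w = 0 := by
    intro w hw
    have := (h₁.smul ht.le).mulVec_eq_zero_of_add (h₂.smul hs.le) hw
    rwa [smul_mulVec, smul_eq_zero, or_iff_right ht.ne'] at this
  obtain ⟨hξ, hη⟩ :=
    Cmat_mulVec_kerVec_eq_zero_of_posSemidef hsum hneg (hC ▸ (h₁.smul ht.le).add (h₂.smul hs.le))
  exact eq_of_Cmat_mulVec_kerVec_eq_zero hsum hneg (hker _ (hC ▸ hξ)) (hker _ (hC ▸ hη))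
end

section
/- For a point c ∈ Q, the following are equivalent: (1) c lies in the topological boundary of Q; (2) there is exactly one pair (u,v) ∈ ℝ² such that the matrix C(c,u,v) is positive semidefinite. -/
/-!
A point `c` is interior to `Q` exactly when it has a positive definite completion. Positive
definiteness is an open condition; conversely, if `t • c ∈ Q` for some `t > 1`, shrinking a
completion towards the identity gives `t⁻¹ • C(t • c, u, v) + (1 - t⁻¹) • 1 = C(c, u / t, v / t)`,
which is positive definite.

A positive definite completion can be perturbed in `u`, so it is not unique. Conversely, given two
completions with, say, `u ≠ u'`, their midpoint `M` is positive semidefinite and its kernel vectors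
lie in the kernels of both, which forces `x₀ = x₁ = 0`. On such vectors, moving `v` towards `0`
makes the form strictly positive, and a small such move turns `M` into a positive definite
completion.
-/

open Matrix Filter Topology

namespace Matrix

variable {n : Type*} [Fintype n]

theorem posDef_of_forall_mem_sphere {B : Matrix n n ℝ} (hB : B.IsHermitian)
    (h : ∀ y ∈ Metric.sphere (0 : n → ℝ) 1, 0 < y ⬝ᵥ B *ᵥ y) : B.PosDef := by
  refine .of_dotProduct_mulVec_pos hB fun x hx => ?_
  have hr : 0 < ‖x‖ := norm_pos_iff.mpr hx
  have hy : ‖x‖⁻¹ • x ∈ Metric.sphere (0 : n → ℝ) 1 := by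
    simpa using norm_smul_inv_norm (𝕜 := ℝ) hx
  have hscale : x ⬝ᵥ B *ᵥ x = ‖x‖ ^ 2 * ((‖x‖⁻¹ • x) ⬝ᵥ B *ᵥ (‖x‖⁻¹ • x)) := by
    rw [mulVec_smul, dotProduct_smul, smul_dotProduct, smul_eq_mul, smul_eq_mul]
    field_simp
  rw [star_trivial, hscale]
  exact mul_pos (by positivity) (h _ hy)

theorem PosDef.eventually_posDef {A : Matrix n n ℝ} (hA : A.PosDef) :
    ∀ᶠ B in 𝓝 A, B.IsHermitian → B.PosDef := by
  have hcont : Continuous fun p : Matrix n n ℝ × (n → ℝ) => p.2 ⬝ᵥ p.1 *ᵥ p.2 :=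
    continuous_snd.dotProduct (continuous_fst.matrix_mulVec continuous_snd)
  have hsphere : ∀ᶠ B in 𝓝 A, ∀ y ∈ Metric.sphere (0 : n → ℝ) 1, 0 < y ⬝ᵥ B *ᵥ y := by
    refine (isCompact_sphere 0 1).eventually_forall_of_forall_eventually fun y hy => ?_
    have hAy := hA.dotProduct_mulVec_pos (ne_zero_of_mem_unit_sphere ⟨y, hy⟩)
    rw [star_trivial] at hAy
    exact hcont.continuousAt.eventually (lt_mem_nhds hAy)
  exact hsphere.mono fun B hB hH => posDef_of_forall_mem_sphere hH hB

theorem PosSemidef.exists_pos_posDef_add_smul {M N : Matrix n n ℝ} (hM : M.PosSemidef)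
    (hN : N.IsHermitian) (hker : ∀ x, x ≠ 0 → M *ᵥ x = 0 → 0 < x ⬝ᵥ N *ᵥ x) :
    ∃ t : ℝ, 0 < t ∧ (M + t • N).PosDef := by
  have hsphere : ∀ᶠ t in 𝓝 (0 : ℝ), ∀ y ∈ Metric.sphere (0 : n → ℝ) 1,
      0 < t → 0 < y ⬝ᵥ (M + t • N) *ᵥ y := by
    refine (isCompact_sphere 0 1).eventually_forall_of_forall_eventually fun y hy => ?_
    rcases (hM.dotProduct_mulVec_nonneg y).lt_or_eq with hpos | hzero
    · have hcont : Continuous fun p : ℝ × (n → ℝ) => p.2 ⬝ᵥ (M + p.1 • N) *ᵥ p.2 :=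
        continuous_snd.dotProduct
          ((continuous_const.add (continuous_fst.smul continuous_const)).matrix_mulVec
            continuous_snd)
      have h0 : 0 < y ⬝ᵥ (M + (0 : ℝ) • N) *ᵥ y := by simpa using hpos
      filter_upwards [hcont.continuousAt.eventually (lt_mem_nhds h0)] with p hp _ using hp
    · have hcont : Continuous fun p : ℝ × (n → ℝ) => p.2 ⬝ᵥ N *ᵥ p.2 :=
        continuous_snd.dotProduct (continuous_const.matrix_mulVec continuous_snd)
      have hNy := hker y (ne_zero_of_mem_unit_sphere ⟨y, hy⟩)
        ((hM.dotProduct_mulVec_zero_iff y).mp hzero.symm)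
      filter_upwards [hcont.continuousAt (x := ((0 : ℝ), y)) |>.eventually (lt_mem_nhds hNy)]
        with p hp ht
      have hMp := hM.dotProduct_mulVec_nonneg p.2
      rw [star_trivial] at hMp
      rw [add_mulVec, dotProduct_add, smul_mulVec, dotProduct_smul, smul_eq_mul]
      positivity
  obtain ⟨t, ht, hty⟩ := hsphere.exists_gt
  exact ⟨t, ht, posDef_of_forall_mem_sphere (hM.isHermitian.add (hN.smul (.all t)))
    fun y hy => hty y hy ht⟩

theorem PosSemidef.mulVec_eq_zero_of_add_mulVec {A B : Matrix n n ℝ}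
    (hA : A.PosSemidef) (hB : B.PosSemidef) {x : n → ℝ} (hx : (A + B) *ᵥ x = 0) :
    A *ᵥ x = 0 ∧ B *ᵥ x = 0 := by
  have hAx := hA.dotProduct_mulVec_nonneg x
  have hBx := hB.dotProduct_mulVec_nonneg x
  have hsum : star x ⬝ᵥ A *ᵥ x + star x ⬝ᵥ B *ᵥ x = 0 := by
    rw [← dotProduct_add, ← add_mulVec, hx, dotProduct_zero]
  exact ⟨(hA.dotProduct_mulVec_zero_iff x).mp (by linarith),
    (hB.dotProduct_mulVec_zero_iff x).mp (by linarith)⟩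

end Matrix

theorem isHermitian_Cmat (c : Fin 4 → ℝ) (u v : ℝ) : (Cmat c u v).IsHermitian := by
  ext i j
  fin_cases i <;> fin_cases j <;> rfl

theorem continuous_Cmat : Continuous fun p : (Fin 4 → ℝ) × ℝ × ℝ => Cmat p.1 p.2.1 p.2.2 := by
  unfold Cmat
  fun_prop

theorem Cmat_smul (r : ℝ) (c : Fin 4 → ℝ) (u v : ℝ) :
    Cmat (r • c) (r * u) (r * v) = r • Cmat c u v + (1 - r) • 1 := by
  ext i j
  fin_cases i <;> fin_cases j <;> simp [Cmat]

theorem Cmat_midpoint (c : Fin 4 → ℝ) (u v u' v' : ℝ) :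
    Cmat c ((u + u') / 2) ((v + v') / 2) = (1 / 2 : ℝ) • (Cmat c u v + Cmat c u' v') := by
  ext i j
  fin_cases i <;> fin_cases j <;> simp [Cmat] <;> ring

/-- Exchanging the two diagonal blocks exchanges the roles of `u` and `v`. -/
theorem Cmat_submatrix_swap (c : Fin 4 → ℝ) (u v : ℝ) :
    (Cmat c u v).submatrix ![2, 3, 0, 1] ![2, 3, 0, 1] = Cmat (c ∘ ![0, 2, 1, 3]) v u := by
  ext i j
  fin_cases i <;> fin_cases j <;> rfl

theorem Cmat_mulVec_eq_zero_iff {c : Fin 4 → ℝ} {u v : ℝ} {x : Fin 4 → ℝ} :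
    Cmat c u v *ᵥ x = 0 ↔
      x 0 + u * x 1 + c 0 * x 2 + c 1 * x 3 = 0 ∧ u * x 0 + x 1 + c 2 * x 2 + c 3 * x 3 = 0 ∧
      c 0 * x 0 + c 2 * x 1 + x 2 + v * x 3 = 0 ∧ c 1 * x 0 + c 3 * x 1 + v * x 2 + x 3 = 0 := by
  simp [Cmat, dotProduct, Fin.sum_univ_four]

/-- `Cmat 0 0 (-w) - 1` is the direction in which the entry `w` moves towards `0`. -/
theorem dotProduct_mulVec_pos_of_Cmat_mulVec_eq_zero {c x : Fin 4 → ℝ} {u v u' v' : ℝ}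
    (hu : u ≠ u') (hx : x ≠ 0) (hCx : Cmat c u v *ᵥ x = 0) (hC'x : Cmat c u' v' *ᵥ x = 0) :
    0 < x ⬝ᵥ (Cmat 0 0 (-((v + v') / 2)) - 1) *ᵥ x := by
  rw [Cmat_mulVec_eq_zero_iff] at hCx hC'x
  obtain ⟨hC0, hC1, hC2, hC3⟩ := hCx
  obtain ⟨hC'0, hC'1, hC'2, -⟩ := hC'x
  have hu' : u - u' ≠ 0 := sub_ne_zero.mpr hu
  have hx0 : x 0 = 0 := (mul_eq_zero.mp (by linear_combination hC1 - hC'1)).resolve_left hu'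
  have hx1 : x 1 = 0 := (mul_eq_zero.mp (by linear_combination hC0 - hC'0)).resolve_left hu'
  simp only [hx0, hx1, mul_zero, add_zero, zero_add] at hC2 hC3 hC'2
  have hx3 : x 3 ≠ 0 := by
    intro hx3
    refine hx (funext fun i => ?_)
    have hx2 : x 2 = 0 := by linear_combination hC2 - v * hx3
    fin_cases i <;> simp [hx0, hx1, hx2, hx3]
  have hvv : v' = v := mul_right_cancel₀ hx3 (by linear_combination hC'2 - hC2)
  have hv : v ^ 2 = 1 := mul_right_cancel₀ hx3 (by linear_combination v * hC2 - hC3)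
  have hx2 : x 2 = -(v * x 3) := by linear_combination hC2
  have hx3sq : 0 < x 3 ^ 2 := by positivity
  simp [Cmat, dotProduct, Fin.sum_univ_four, sub_mulVec, hx0, hx1, hx2, hvv]
  nlinarith

theorem exists_posDef_Cmat_of_fst_ne {c : Fin 4 → ℝ} {u v u' v' : ℝ}
    (h : (Cmat c u v).PosSemidef) (h' : (Cmat c u' v').PosSemidef) (hu : u ≠ u') :
    ∃ U V, (Cmat c U V).PosDef := by
  set V := (v + v') / 2
  have hM : (Cmat c ((u + u') / 2) V).PosSemidef := by
    rw [Cmat_midpoint]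
    exact (h.add h').smul (by norm_num)
  have hN : (Cmat 0 0 (-V) - 1).IsHermitian := (isHermitian_Cmat _ _ _).sub isHermitian_one
  obtain ⟨t, -, ht⟩ := hM.exists_pos_posDef_add_smul hN fun x hx hMx => by
    rw [Cmat_midpoint, smul_mulVec, smul_eq_zero] at hMx
    obtain ⟨hCx, hC'x⟩ := h.mulVec_eq_zero_of_add_mulVec h' (hMx.resolve_left (by norm_num))
    exact dotProduct_mulVec_pos_of_Cmat_mulVec_eq_zero hu hx hCx hC'x
  refine ⟨(u + u') / 2, V - t * V, ?_⟩
  convert ht using 1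
  ext i j
  fin_cases i <;> fin_cases j <;> simp [Cmat] <;> ring

theorem exists_posDef_Cmat_of_ne {c : Fin 4 → ℝ} {u v u' v' : ℝ}
    (h : (Cmat c u v).PosSemidef) (h' : (Cmat c u' v').PosSemidef) (huv : (u, v) ≠ (u', v')) :
    ∃ U V, (Cmat c U V).PosDef := by
  by_cases hu : u = u'
  · have hv : v ≠ v' := fun hv => huv (by rw [hu, hv])
    obtain ⟨V, U, hVU⟩ := exists_posDef_Cmat_of_fst_ne
      (Cmat_submatrix_swap c u v ▸ h.submatrix _) (Cmat_submatrix_swap c u' v' ▸ h'.submatrix _) hv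
    refine ⟨U, V, ?_⟩
    have hswap := hVU.submatrix (e := ![2, 3, 0, 1]) (by decide)
    rwa [Cmat_submatrix_swap, Function.comp_assoc] at hswap
  · exact exists_posDef_Cmat_of_fst_ne h h' hu

theorem mem_interior_Qbody_iff {c : Fin 4 → ℝ} :
    c ∈ interior Qbody ↔ ∃ u v, (Cmat c u v).PosDef := by
  rw [mem_interior_iff_mem_nhds]
  constructor
  · intro hc
    have hcont : ContinuousAt (fun t : ℝ => t • c) 1 := by fun_prop
    have hev : ∀ᶠ t in 𝓝 (1 : ℝ), t • c ∈ Qbody := hcont.eventually (by simpa using hc)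
    obtain ⟨t, ht, u, v, hC⟩ := hev.exists_gt
    refine ⟨t⁻¹ * u, t⁻¹ * v, ?_⟩
    have hshrink := Cmat_smul t⁻¹ (t • c) u v
    rw [inv_smul_smul₀ (by positivity)] at hshrink
    rw [hshrink]
    exact (PosDef.one.smul (sub_pos.mpr (inv_lt_one_of_one_lt₀ ht))).posSemidef_add
      (hC.smul (by positivity))
  · rintro ⟨u, v, h⟩
    have hcont : Continuous fun c' : Fin 4 → ℝ => Cmat c' u v :=
      continuous_Cmat.comp (by fun_prop : Continuous fun c' : Fin 4 → ℝ => (c', u, v))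
    filter_upwards [hcont.continuousAt.eventually h.eventually_posDef] with c' hc'
    exact ⟨u, v, (hc' (isHermitian_Cmat c' u v)).posSemidef⟩

theorem existsUnique_Cmat_iff {c : Fin 4 → ℝ} (hc : c ∈ Qbody) :
    (∃! uv : ℝ × ℝ, (Cmat c uv.1 uv.2).PosSemidef) ↔ ¬ ∃ u v, (Cmat c u v).PosDef := by
  constructor
  · rintro ⟨uv, -, huniq⟩ ⟨u, v, h⟩
    have hcont : Continuous fun t : ℝ => Cmat c t v :=
      continuous_Cmat.comp (by fun_prop : Continuous fun t : ℝ => (c, t, v))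
    obtain ⟨t, htu, ht⟩ := (hcont.continuousAt.eventually h.eventually_posDef).exists_gt
    have hsame := (huniq (t, v) (ht (isHermitian_Cmat c t v)).posSemidef).trans
      (huniq (u, v) h.posSemidef).symm
    exact htu.ne' (congrArg Prod.fst hsame)
  · intro hnot
    obtain ⟨u, v, h⟩ := hc
    refine ⟨(u, v), h, fun uv' h' => ?_⟩
    by_contra hne
    exact hnot (exists_posDef_Cmat_of_ne h' h hne)

theorem stmt10 (c : Fin 4 → ℝ) (hc : c ∈ Qbody) :
    c ∈ frontier Qbody ↔ ∃! uv : ℝ × ℝ, (Cmat c uv.1 uv.2).PosSemidef := by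
  rw [mem_frontier_iff_notMem_interior hc, mem_interior_Qbody_iff, existsUnique_Cmat_iff hc]
end

section
/- Let a₁, a₂, b₁, b₂ ∈ ℝ and consider the quadratic polynomials f₁(x) = b₁ − (x − a₁)² and f₂(x) = b₂ − (x − a₂)². There exists u ∈ ℝ with f₁(u) ≥ 0 and f₂(u) ≥ 0 if and only if b₁ ≥ 0 and b₂ ≥ 0 and ( b₁ + b₂ − (a₁ − a₂)² ≥ 0 or 4b₁b₂ − (b₁ + b₂ − (a₁ − a₂)²)² ≥ 0 ). Moreover, there exists u ∈ ℝ with f₁(u) > 0 and f₂(u) > 0 if and only if b₁ > 0 and b₂ > 0 and ( b₁ + b₂ − (a₁ − a₂)² ≥ 0 or 4b₁b₂ − (b₁ + b₂ − (a₁ − a₂)²)² > 0 ). -/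
/-!
Where it is nonnegative, `b - (u - a) ^ 2` says that `u` lies in the interval of radius `√b`
around `a`, so the two parabolas are simultaneously nonnegative exactly when the intervals
meet, i.e. when `|a₁ - a₂| ≤ √b₁ + √b₂`. Squaring, this reads `-t ≤ 2 √b₁ √b₂` with
`t = b₁ + b₂ - (a₁ - a₂) ^ 2`, which holds trivially when `t ≥ 0` and otherwise amounts to
`t ^ 2 ≤ (2 √b₁ √b₂) ^ 2 = 4 b₁ b₂`. The strict case is the same argument with open intervals.
-/

open Real Metric

lemma sub_sq_nonneg_iff {a b u : ℝ} : 0 ≤ b - (u - a) ^ 2 ↔ 0 ≤ b ∧ |u - a| ≤ √b := by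
  rw [sub_nonneg]
  refine ⟨fun h => ⟨(sq_nonneg _).trans h, abs_le_sqrt h⟩, fun ⟨hb, h⟩ => ?_⟩
  rwa [← sq_abs, ← le_sqrt (abs_nonneg _) hb]

lemma sub_sq_pos_iff {a b u : ℝ} : 0 < b - (u - a) ^ 2 ↔ 0 < b ∧ |u - a| < √b := by
  rw [sub_pos, ← sq_abs, ← lt_sqrt (abs_nonneg _)]
  exact ⟨fun h => ⟨sqrt_pos.1 ((abs_nonneg _).trans_lt h), h⟩, And.right⟩

lemma exists_abs_sub_le_and_abs_sub_le_iff_s13 {a₁ a₂ r₁ r₂ : ℝ} (h₁ : 0 ≤ r₁) (h₂ : 0 ≤ r₂) :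
    (∃ u, |u - a₁| ≤ r₁ ∧ |u - a₂| ≤ r₂) ↔ |a₁ - a₂| ≤ r₁ + r₂ := by
  rw [← not_lt, ← dist_eq, ← disjoint_closedBall_closedBall_iff h₁ h₂, Set.not_disjoint_iff]
  simp only [mem_closedBall, dist_eq]

lemma exists_abs_sub_lt_and_abs_sub_lt_iff {a₁ a₂ r₁ r₂ : ℝ} (h₁ : 0 < r₁) (h₂ : 0 < r₂) :
    (∃ u, |u - a₁| < r₁ ∧ |u - a₂| < r₂) ↔ |a₁ - a₂| < r₁ + r₂ := by
  rw [← not_le, ← dist_eq, ← disjoint_ball_ball_iff h₁ h₂, Set.not_disjoint_iff]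
  simp only [mem_ball, dist_eq]

lemma exists_sub_sq_nonneg_and_sub_sq_nonneg_iff {a₁ a₂ b₁ b₂ : ℝ} :
    (∃ u, 0 ≤ b₁ - (u - a₁) ^ 2 ∧ 0 ≤ b₂ - (u - a₂) ^ 2) ↔
      0 ≤ b₁ ∧ 0 ≤ b₂ ∧ |a₁ - a₂| ≤ √b₁ + √b₂ := by
  simp only [sub_sq_nonneg_iff]
  constructor
  · rintro ⟨u, ⟨hb₁, hu₁⟩, hb₂, hu₂⟩
    exact ⟨hb₁, hb₂, (exists_abs_sub_le_and_abs_sub_le_iff_s13 (sqrt_nonneg _) (sqrt_nonneg _)).1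
      ⟨u, hu₁, hu₂⟩⟩
  · rintro ⟨hb₁, hb₂, h⟩
    obtain ⟨u, hu₁, hu₂⟩ :=
      (exists_abs_sub_le_and_abs_sub_le_iff_s13 (sqrt_nonneg _) (sqrt_nonneg _)).2 h
    exact ⟨u, ⟨hb₁, hu₁⟩, hb₂, hu₂⟩

lemma exists_sub_sq_pos_and_sub_sq_pos_iff {a₁ a₂ b₁ b₂ : ℝ} :
    (∃ u, 0 < b₁ - (u - a₁) ^ 2 ∧ 0 < b₂ - (u - a₂) ^ 2) ↔
      0 < b₁ ∧ 0 < b₂ ∧ |a₁ - a₂| < √b₁ + √b₂ := by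
  simp only [sub_sq_pos_iff]
  constructor
  · rintro ⟨u, ⟨hb₁, hu₁⟩, hb₂, hu₂⟩
    exact ⟨hb₁, hb₂, (exists_abs_sub_lt_and_abs_sub_lt_iff (sqrt_pos.2 hb₁) (sqrt_pos.2 hb₂)).1
      ⟨u, hu₁, hu₂⟩⟩
  · rintro ⟨hb₁, hb₂, h⟩
    obtain ⟨u, hu₁, hu₂⟩ :=
      (exists_abs_sub_lt_and_abs_sub_lt_iff (sqrt_pos.2 hb₁) (sqrt_pos.2 hb₂)).2 h
    exact ⟨u, ⟨hb₁, hu₁⟩, hb₂, hu₂⟩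

lemma neg_le_iff_nonneg_or_sq_le {t p : ℝ} (hp : 0 ≤ p) : -t ≤ p ↔ 0 ≤ t ∨ t ^ 2 ≤ p ^ 2 := by
  rcases le_or_gt 0 t with ht | ht
  · simpa [ht] using (neg_nonpos.2 ht).trans hp
  · rw [← neg_sq, sq_le_sq₀ (neg_nonneg.2 ht.le) hp]
    simp [ht.not_ge]

lemma neg_lt_iff_nonneg_or_sq_lt {t p : ℝ} (hp : 0 < p) : -t < p ↔ 0 ≤ t ∨ t ^ 2 < p ^ 2 := by
  rcases le_or_gt 0 t with ht | ht
  · simpa [ht] using (neg_nonpos.2 ht).trans_lt hp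
  · rw [← neg_sq, sq_lt_sq₀ (neg_nonneg.2 ht.le) hp.le]
    simp [ht.not_ge]

lemma abs_le_sqrt_add_sqrt_iff_s13 {b₁ b₂ d : ℝ} (hb₁ : 0 ≤ b₁) (hb₂ : 0 ≤ b₂) :
    |d| ≤ √b₁ + √b₂ ↔ 0 ≤ b₁ + b₂ - d ^ 2 ∨ 0 ≤ 4 * b₁ * b₂ - (b₁ + b₂ - d ^ 2) ^ 2 := by
  have hsq : (√b₁ + √b₂) ^ 2 = b₁ + b₂ + 2 * (√b₁ * √b₂) := by
    rw [add_sq, sq_sqrt hb₁, sq_sqrt hb₂]; ring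
  have hp : (2 * (√b₁ * √b₂)) ^ 2 = 4 * b₁ * b₂ := by
    rw [mul_pow, mul_pow, sq_sqrt hb₁, sq_sqrt hb₂]; ring
  calc |d| ≤ √b₁ + √b₂ ↔ -(b₁ + b₂ - d ^ 2) ≤ 2 * (√b₁ * √b₂) := by
        rw [← sq_le_sq₀ (abs_nonneg d) (by positivity), sq_abs, hsq]
        constructor <;> intro <;> linarith
    _ ↔ _ := by rw [neg_le_iff_nonneg_or_sq_le (by positivity), hp, sub_nonneg (a := 4 * b₁ * b₂)]

lemma abs_lt_sqrt_add_sqrt_iff {b₁ b₂ d : ℝ} (hb₁ : 0 < b₁) (hb₂ : 0 < b₂) :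
    |d| < √b₁ + √b₂ ↔ 0 ≤ b₁ + b₂ - d ^ 2 ∨ 0 < 4 * b₁ * b₂ - (b₁ + b₂ - d ^ 2) ^ 2 := by
  have hsq : (√b₁ + √b₂) ^ 2 = b₁ + b₂ + 2 * (√b₁ * √b₂) := by
    rw [add_sq, sq_sqrt hb₁.le, sq_sqrt hb₂.le]; ring
  have hp : (2 * (√b₁ * √b₂)) ^ 2 = 4 * b₁ * b₂ := by
    rw [mul_pow, mul_pow, sq_sqrt hb₁.le, sq_sqrt hb₂.le]; ring
  calc |d| < √b₁ + √b₂ ↔ -(b₁ + b₂ - d ^ 2) < 2 * (√b₁ * √b₂) := by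
        rw [← sq_lt_sq₀ (abs_nonneg d) (by positivity), sq_abs, hsq]
        constructor <;> intro <;> linarith
    _ ↔ _ := by
      rw [neg_lt_iff_nonneg_or_sq_lt (by positivity), hp, sub_pos (a := 4 * b₁ * b₂)]

theorem stmt13 (a₁ a₂ b₁ b₂ : ℝ) :
    ((∃ u : ℝ, 0 ≤ b₁ - (u - a₁) ^ 2 ∧ 0 ≤ b₂ - (u - a₂) ^ 2) ↔
      (0 ≤ b₁ ∧ 0 ≤ b₂ ∧
        (0 ≤ b₁ + b₂ - (a₁ - a₂) ^ 2 ∨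
          0 ≤ 4 * b₁ * b₂ - (b₁ + b₂ - (a₁ - a₂) ^ 2) ^ 2))) ∧
    ((∃ u : ℝ, 0 < b₁ - (u - a₁) ^ 2 ∧ 0 < b₂ - (u - a₂) ^ 2) ↔
      (0 < b₁ ∧ 0 < b₂ ∧
        (0 ≤ b₁ + b₂ - (a₁ - a₂) ^ 2 ∨
          0 < 4 * b₁ * b₂ - (b₁ + b₂ - (a₁ - a₂) ^ 2) ^ 2))) := by
  rw [exists_sub_sq_nonneg_and_sub_sq_nonneg_iff, exists_sub_sq_pos_and_sub_sq_pos_iff]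
  exact ⟨and_congr_right fun hb₁ => and_congr_right fun hb₂ => abs_le_sqrt_add_sqrt_iff_s13 hb₁ hb₂,
    and_congr_right fun hb₁ => and_congr_right fun hb₂ => abs_lt_sqrt_add_sqrt_iff hb₁ hb₂⟩
end

section
/- Let c = (c₁₁,c₁₂,c₂₁,c₂₂) ∈ ℝ⁴ and suppose there exists u ∈ ℝ such that both 3×3 matrices [[1,u,c₁₁],[u,1,c₂₁],[c₁₁,c₂₁,1]] and [[1,u,c₁₂],[u,1,c₂₂],[c₁₂,c₂₂,1]] are positive semidefinite. Then there exists v ∈ ℝ such that the 4×4 matrix C(c,u,v) is positive semidefinite; in particular c ∈ Q. -/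
/-!
Write `A = [[1,u],[u,1]]` and `Q` for its quadratic form. Positive semidefiniteness of the
3×3 block with last column `p = (c₁₁, c₂₁)` forces `p = A α` for some `α` with `Q α ≤ 1`;
likewise `(c₁₂, c₂₂) = A β` with `Q β ≤ 1`. For `v = αᵀ A β` the quadratic form of `C(c,u,v)`
at `(x, s, t)` is the sum of squares `Q (x + s α + t β) + (1 - Q α) s² + (1 - Q β) t²`.
-/

lemma quadForm_nonneg_of_posSemidef {u p q : ℝ}
    (h : (!![1, u, p; u, 1, q; p, q, 1] : Matrix (Fin 3) (Fin 3) ℝ).PosSemidef) (x y z : ℝ) :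
    0 ≤ x ^ 2 + y ^ 2 + z ^ 2 + 2 * u * x * y + 2 * p * x * z + 2 * q * y * z := by
  have := h.dotProduct_mulVec_nonneg ![x, y, z]
  simp only [dotProduct, star_trivial, Matrix.mulVec, Matrix.of_apply, Matrix.cons_val',
    Matrix.cons_val_fin_one, Fin.sum_univ_three, Matrix.cons_val_zero, Matrix.cons_val_one,
    Matrix.cons_val, one_mul] at this
  linarith

lemma Cmat_posSemidef_of_quadForm_nonneg {c : Fin 4 → ℝ} {u v : ℝ}
    (h : ∀ a b s t : ℝ, 0 ≤ a ^ 2 + b ^ 2 + s ^ 2 + t ^ 2 + 2 * u * a * b + 2 * c 0 * a * s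
      + 2 * c 1 * a * t + 2 * c 2 * b * s + 2 * c 3 * b * t + 2 * v * s * t) :
    (Cmat c u v).PosSemidef := by
  refine Matrix.PosSemidef.of_dotProduct_mulVec_nonneg ?_ fun x => ?_
  · ext i j
    fin_cases i <;> fin_cases j <;> simp [Cmat]
  · have := h (x 0) (x 1) (x 2) (x 3)
    simp only [dotProduct, star_trivial, Matrix.mulVec, Cmat, Matrix.of_apply, Matrix.cons_val',
      Matrix.cons_val_fin_one, Fin.sum_univ_four, Matrix.cons_val_zero, Matrix.cons_val_one,
      Matrix.cons_val, one_mul]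
    linarith

lemma sq_le_one_of_posSemidef {u p q : ℝ}
    (h : (!![1, u, p; u, 1, q; p, q, 1] : Matrix (Fin 3) (Fin 3) ℝ).PosSemidef) : u ^ 2 ≤ 1 := by
  nlinarith [quadForm_nonneg_of_posSemidef h 1 (-u) 0]

lemma exists_mem_range_of_posSemidef {u p q : ℝ}
    (h : (!![1, u, p; u, 1, q; p, q, 1] : Matrix (Fin 3) (Fin 3) ℝ).PosSemidef) :
    ∃ α₁ α₂ : ℝ, p = α₁ + u * α₂ ∧ q = u * α₁ + α₂ := by
  have hpq : (p - u * q) ^ 2 ≤ 1 - u ^ 2 := by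
    nlinarith [quadForm_nonneg_of_posSemidef h 1 (-u) (-(p - u * q))]
  rcases (sub_nonneg.mpr (sq_le_one_of_posSemidef h)).eq_or_lt with hD | hD
  · -- `u² = 1` forces `p = u q`
    refine ⟨0, q, ?_, by ring⟩
    nlinarith [sq_nonneg (p - u * q)]
  · refine ⟨(p - u * q) / (1 - u ^ 2), (q - u * p) / (1 - u ^ 2), ?_, ?_⟩ <;>
      field_simp <;> ring

lemma quadForm_le_one_of_posSemidef {u p q α₁ α₂ : ℝ}
    (h : (!![1, u, p; u, 1, q; p, q, 1] : Matrix (Fin 3) (Fin 3) ℝ).PosSemidef)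
    (hp : p = α₁ + u * α₂) (hq : q = u * α₁ + α₂) :
    α₁ ^ 2 + 2 * u * α₁ * α₂ + α₂ ^ 2 ≤ 1 := by
  subst hp hq
  nlinarith [quadForm_nonneg_of_posSemidef h (-α₁) (-α₂) 1]

lemma Cmat_posSemidef_of_mem_range {c : Fin 4 → ℝ} {u α₁ α₂ β₁ β₂ : ℝ} (hu : u ^ 2 ≤ 1)
    (hc₀ : c 0 = α₁ + u * α₂) (hc₂ : c 2 = u * α₁ + α₂)
    (hc₁ : c 1 = β₁ + u * β₂) (hc₃ : c 3 = u * β₁ + β₂)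
    (hα : α₁ ^ 2 + 2 * u * α₁ * α₂ + α₂ ^ 2 ≤ 1) (hβ : β₁ ^ 2 + 2 * u * β₁ * β₂ + β₂ ^ 2 ≤ 1) :
    (Cmat c u (α₁ * β₁ + u * (α₁ * β₂ + α₂ * β₁) + α₂ * β₂)).PosSemidef := by
  refine Cmat_posSemidef_of_quadForm_nonneg fun a b s t => ?_
  set y₁ := a + s * α₁ + t * β₁
  set y₂ := b + s * α₂ + t * β₂
  have hy : 0 ≤ (y₁ + u * y₂) ^ 2 + (1 - u ^ 2) * y₂ ^ 2 := by
    have := sub_nonneg.mpr hu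
    positivity
  have hs := mul_nonneg (sq_nonneg s) (sub_nonneg.mpr hα)
  have ht := mul_nonneg (sq_nonneg t) (sub_nonneg.mpr hβ)
  rw [hc₀, hc₁, hc₂, hc₃]
  linear_combination hy + hs + ht

theorem stmt14 (c : Fin 4 → ℝ) (u : ℝ)
    (h1 : (!![1, u, c 0; u, 1, c 2; c 0, c 2, 1] : Matrix (Fin 3) (Fin 3) ℝ).PosSemidef)
    (h2 : (!![1, u, c 1; u, 1, c 3; c 1, c 3, 1] : Matrix (Fin 3) (Fin 3) ℝ).PosSemidef) :
    (∃ v : ℝ, (Cmat c u v).PosSemidef) ∧ c ∈ Qbody := by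
  obtain ⟨α₁, α₂, hc₀, hc₂⟩ := exists_mem_range_of_posSemidef h1
  obtain ⟨β₁, β₂, hc₁, hc₃⟩ := exists_mem_range_of_posSemidef h2
  have hC := Cmat_posSemidef_of_mem_range (sq_le_one_of_posSemidef h1) hc₀ hc₂ hc₁ hc₃
    (quadForm_le_one_of_posSemidef h1 hc₀ hc₂) (quadForm_le_one_of_posSemidef h2 hc₁ hc₃)
  exact ⟨⟨_, hC⟩, u, _, hC⟩
end

section
/- A point c = (c₁₁,c₁₂,c₂₁,c₂₂) ∈ ℝ⁴ lies in the quantum correlation body Q if and only if there exist complex 4×4 matrices ρ, A₁, A₂, B₁, B₂ such that ρ is positive semidefinite with trace 1, each A_i and B_j is Hermitian with both 1−A_i, 1+A_i, 1−B_j, 1+B_j positive semidefinite, A_iB_j = B_jA_i for all i,j ∈ {1,2}, and tr(ρ A_i B_j) = c_{ij} for all i,j ∈ {1,2}. (In other words, every point of Q is realized by a quantum model on a Hilbert space of dimension 4.) -/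
/-!
If a quantum model is given, the Gram matrix `G_kl = Re tr (ρ X_k X_l)` of the observables
`X = (A₁, A₂, B₁, B₂)` is positive semidefinite, its diagonal entries are at most `1` because
`1 - X_k² ⪰ 0`, and `C(c, G₁₂, G₃₄) = G + diag (1 - G_kk)`.

Conversely, if `C(c, u, v) ⪰ 0`, its principal `3 × 3` minors through the rows of `A₁, A₂` let us
pick unit vectors `a₁ = e₁`, `a₂ = (u, √(1 - u²), 0)` and `b₁, b₂` in `ℝ³` with
`⟨a_i, b_j⟩ = c_ij`. Tsirelson's model `A_i = (a_i · σ) ⊗ 1`, `B_j = 1 ⊗ (b_j · σ)ᵀ`, with `ρ`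
maximally entangled on `ℂ² ⊗ ℂ²`, realises these values since `tr (ρ (P ⊗ Qᵀ)) = tr (P Q) / 2`.
-/

open ComplexOrder

open Matrix Kronecker

def HasQuantumModel (ι : Type*) [Fintype ι] [DecidableEq ι] (c : Fin 4 → ℝ) : Prop :=
  ∃ (ρ : Matrix ι ι ℂ) (A B : Fin 2 → Matrix ι ι ℂ),
    ρ.PosSemidef ∧ ρ.trace = 1 ∧
    (∀ i, (A i).IsHermitian) ∧ (∀ j, (B j).IsHermitian) ∧
    (∀ i, (1 - A i).PosSemidef) ∧ (∀ i, (1 + A i).PosSemidef) ∧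
    (∀ j, (1 - B j).PosSemidef) ∧ (∀ j, (1 + B j).PosSemidef) ∧
    (∀ i j, A i * B j = B j * A i) ∧
    (ρ * A 0 * B 0).trace = (c 0 : ℂ) ∧
    (ρ * A 0 * B 1).trace = (c 1 : ℂ) ∧
    (ρ * A 1 * B 0).trace = (c 2 : ℂ) ∧
    (ρ * A 1 * B 1).trace = (c 3 : ℂ)

namespace Matrix

lemma trace_reindex {ι κ R : Type*} [Fintype ι] [Fintype κ] [AddCommMonoid R] (e : ι ≃ κ)
    (M : Matrix ι ι R) : (reindex e e M).trace = M.trace :=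
  Fintype.sum_equiv e.symm _ _ fun _ => rfl

lemma IsHermitian.kronecker {m n : Type*} {X : Matrix m m ℂ} {Y : Matrix n n ℂ}
    (hX : X.IsHermitian) (hY : Y.IsHermitian) : (X ⊗ₖ Y).IsHermitian := by
  rw [IsHermitian, conjTranspose_kronecker, hX.eq, hY.eq]

variable {ι : Type*} [Fintype ι]

open scoped MatrixOrder in
lemma PosSemidef.trace_mul_nonneg {ρ M : Matrix ι ι ℂ} (hρ : ρ.PosSemidef) (hM : M.PosSemidef) :
    0 ≤ (ρ * M).trace := by
  classical
  obtain ⟨R, rfl⟩ := CStarAlgebra.nonneg_iff_eq_star_mul_self.mp hM.nonneg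
  rw [star_eq_conjTranspose, ← Matrix.mul_assoc, trace_mul_comm]
  simpa only [Matrix.mul_assoc] using (hρ.mul_mul_conjTranspose_same R).trace_nonneg

lemma re_trace_mul_mul_comm {ρ X Y : Matrix ι ι ℂ} (hρ : ρ.IsHermitian) (hX : X.IsHermitian)
    (hY : Y.IsHermitian) : (ρ * X * Y).trace.re = (ρ * Y * X).trace.re := by
  have : (ρ * Y * X).trace = star (ρ * X * Y).trace := by
    rw [← trace_conjTranspose, conjTranspose_mul, conjTranspose_mul, hρ.eq, hX.eq, hY.eq,
      Matrix.mul_assoc ρ, trace_mul_comm, Matrix.mul_assoc]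
  rw [this, Complex.star_def, Complex.conj_re]

lemma posSemidef_re_trace_mul_mul {κ : Type*} [Fintype κ] {ρ : Matrix ι ι ℂ}
    (hρ : ρ.PosSemidef) {X : κ → Matrix ι ι ℂ} (hX : ∀ k, (X k).IsHermitian) :
    (of fun k l => (ρ * X k * X l).trace.re).PosSemidef := by
  refine .of_dotProduct_mulVec_nonneg ?_ fun x => ?_
  · ext k l
    exact re_trace_mul_mul_comm hρ.1 (hX l) (hX k)
  set Y := ∑ k, (x k : ℂ) • X k
  have hY : Y.IsHermitian := by
    simp only [IsHermitian, Y, conjTranspose_sum, conjTranspose_smul, Complex.star_def,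
      Complex.conj_ofReal, fun k => (hX k).eq]
  have hYY : 0 ≤ (ρ * Y * Y).trace := by
    simpa only [hY.eq, Matrix.mul_assoc] using
      hρ.trace_mul_nonneg (posSemidef_conjTranspose_mul_self Y)
  have hexp : (ρ * Y * Y).trace.re =
      star x ⬝ᵥ (of fun k l => (ρ * X k * X l).trace.re) *ᵥ x := by
    simp only [Y, Matrix.sum_mul, Matrix.mul_smul, Matrix.smul_mul, trace_sum, trace_smul,
      Complex.re_sum, smul_eq_mul, Complex.re_ofReal_mul, dotProduct, mulVec, of_apply,
      Finset.mul_sum, star_trivial]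
    rw [Finset.sum_comm]
    refine Finset.sum_congr rfl fun k _ => Finset.sum_congr rfl fun l _ => ?_
    ring
  exact hexp ▸ (Complex.nonneg_iff.mp hYY).1

variable [DecidableEq ι]

lemma PosSemidef.one_sub_mul_self {X : Matrix ι ι ℂ} (hX : X.IsHermitian)
    (h₁ : (1 - X).PosSemidef) (h₂ : (1 + X).PosSemidef) : (1 - X * X).PosSemidef := by
  have key : (1 + X)ᴴ * (1 - X) * (1 + X) + (1 - X)ᴴ * (1 + X) * (1 - X) =
      (2 : ℝ) • (1 - X * X) := by
    rw [conjTranspose_add, conjTranspose_sub, conjTranspose_one, hX.eq, two_smul]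
    noncomm_ring
  have := (h₁.conjTranspose_mul_mul_same (1 + X)).add (h₂.conjTranspose_mul_mul_same (1 - X))
  rw [key] at this
  simpa using this.smul (by norm_num : (0 : ℝ) ≤ 2⁻¹)

lemma re_trace_mul_mul_self_le_one {ρ X : Matrix ι ι ℂ} (hρ : ρ.PosSemidef) (hρ_tr : ρ.trace = 1)
    (hX : X.IsHermitian) (h₁ : (1 - X).PosSemidef) (h₂ : (1 + X).PosSemidef) :
    (ρ * X * X).trace.re ≤ 1 := by
  have := (Complex.nonneg_iff.mp (hρ.trace_mul_nonneg (PosSemidef.one_sub_mul_self hX h₁ h₂))).1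
  rwa [Matrix.mul_sub, Matrix.mul_one, trace_sub, hρ_tr, Complex.sub_re, Complex.one_re,
    ← Matrix.mul_assoc, sub_nonneg] at this

lemma posSemidef_one_sub_of_mul_self_eq_one {M : Matrix ι ι ℂ} (hM : M.IsHermitian)
    (hM_sq : M * M = 1) : (1 - M).PosSemidef := by
  have h : (1 - M)ᴴ * (1 - M) = (2 : ℝ) • (1 - M) := by
    rw [conjTranspose_sub, conjTranspose_one, hM.eq, two_smul]
    calc (1 - M) * (1 - M) = 1 - M - M + M * M := by noncomm_ring
      _ = (1 - M) + (1 - M) := by rw [hM_sq]; abel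
  have := (posSemidef_conjTranspose_mul_self (1 - M)).smul (by norm_num : (0 : ℝ) ≤ 2⁻¹)
  rwa [h, smul_smul, inv_mul_cancel₀ two_ne_zero, one_smul] at this

lemma posSemidef_one_add_of_mul_self_eq_one {M : Matrix ι ι ℂ} (hM : M.IsHermitian)
    (hM_sq : M * M = 1) : (1 + M).PosSemidef := by
  simpa using posSemidef_one_sub_of_mul_self_eq_one hM.neg (by simpa using hM_sq)

end Matrix

theorem HasQuantumModel.reindex {ι κ : Type*} [Fintype ι] [DecidableEq ι] [Fintype κ]
    [DecidableEq κ] {c : Fin 4 → ℝ} (e : ι ≃ κ) (h : HasQuantumModel ι c) :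
    HasQuantumModel κ c := by
  obtain ⟨ρ, A, B, hρ, hρ_tr, hA, hB, hA₁, hA₂, hB₁, hB₂, hAB, h₀₀, h₀₁, h₁₀, h₁₁⟩ := h
  let f := reindexAlgEquiv ℂ ℂ e
  have hf_psd {M : Matrix ι ι ℂ} (hM : M.PosSemidef) : (f M).PosSemidef := hM.submatrix _
  have hf_trace (M : Matrix ι ι ℂ) : (f M).trace = M.trace := trace_reindex e M
  refine ⟨f ρ, fun i => f (A i), fun j => f (B j), hf_psd hρ, (hf_trace ρ).trans hρ_tr,
    fun i => (hA i).reindex e, fun j => (hB j).reindex e, fun i => ?_, fun i => ?_, fun j => ?_,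
    fun j => ?_, fun i j => ?_, ?_, ?_, ?_, ?_⟩
  all_goals simp only [← map_one f, ← map_sub, ← map_add, ← map_mul, hf_trace]
  exacts [hf_psd (hA₁ i), hf_psd (hA₂ i), hf_psd (hB₁ j), hf_psd (hB₂ j), by rw [hAB], h₀₀, h₀₁,
    h₁₀, h₁₁]

theorem mem_Qbody_of_hasQuantumModel {ι : Type*} [Fintype ι] [DecidableEq ι] {c : Fin 4 → ℝ}
    (h : HasQuantumModel ι c) : c ∈ Qbody := by
  obtain ⟨ρ, A, B, hρ, hρ_tr, hA, hB, hA₁, hA₂, hB₁, hB₂, -, h₀₀, h₀₁, h₁₀, h₁₁⟩ := h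
  set X : Fin 4 → Matrix ι ι ℂ := ![A 0, A 1, B 0, B 1]
  have hX : ∀ k, (X k).IsHermitian := by
    intro k; fin_cases k <;> simp [X, hA, hB]
  set G : Matrix (Fin 4) (Fin 4) ℝ := of fun k l => (ρ * X k * X l).trace.re
  have hG_symm : ∀ k l, G l k = G k l := fun k l => re_trace_mul_mul_comm hρ.1 (hX l) (hX k)
  have hG_diag : ∀ k, G k k ≤ 1 := by
    intro k
    fin_cases k
    · exact re_trace_mul_mul_self_le_one hρ hρ_tr (hA 0) (hA₁ 0) (hA₂ 0)
    · exact re_trace_mul_mul_self_le_one hρ hρ_tr (hA 1) (hA₁ 1) (hA₂ 1)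
    · exact re_trace_mul_mul_self_le_one hρ hρ_tr (hB 0) (hB₁ 0) (hB₂ 0)
    · exact re_trace_mul_mul_self_le_one hρ hρ_tr (hB 1) (hB₁ 1) (hB₂ 1)
  have hG₀₂ : c 0 = G 0 2 := by simp [G, X, h₀₀]
  have hG₀₃ : c 1 = G 0 3 := by simp [G, X, h₀₁]
  have hG₁₂ : c 2 = G 1 2 := by simp [G, X, h₁₀]
  have hG₁₃ : c 3 = G 1 3 := by simp [G, X, h₁₁]
  have hC : Cmat c (G 0 1) (G 2 3) = G + diagonal fun k => 1 - G k k := by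
    ext k l
    fin_cases k <;> fin_cases l <;> simp [Cmat, hG₀₂, hG₀₃, hG₁₂, hG₁₃] <;>
      exact hG_symm _ _
  refine ⟨G 0 1, G 2 3, hC ▸ ?_⟩
  exact (posSemidef_re_trace_mul_mul hρ hX).add
    (posSemidef_diagonal_iff.mpr fun k => sub_nonneg.mpr (hG_diag k))

open Complex in
/-- `x σ_x + y σ_y + z σ_z` for `v = (x, y, z)`. -/
def pauliDot (v : Fin 3 → ℝ) : Matrix (Fin 2) (Fin 2) ℂ :=
  !![(v 2 : ℂ), v 0 - v 1 * I; v 0 + v 1 * I, -v 2]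

lemma pauliDot_isHermitian (v : Fin 3 → ℝ) : (pauliDot v).IsHermitian := by
  ext i j
  fin_cases i <;> fin_cases j <;> simp [pauliDot, Complex.ext_iff]

lemma pauliDot_mul_self (v : Fin 3 → ℝ) : pauliDot v * pauliDot v = ((v ⬝ᵥ v : ℝ) : ℂ) • 1 := by
  ext i j
  fin_cases i <;> fin_cases j <;> apply Complex.ext <;>
    simp [pauliDot, dotProduct, Fin.sum_univ_three, mul_apply, one_apply] <;> ring

lemma trace_pauliDot_mul (v w : Fin 3 → ℝ) :
    (pauliDot v * pauliDot w).trace = 2 * (v ⬝ᵥ w : ℝ) := by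
  apply Complex.ext <;> simp [pauliDot, trace, dotProduct, Fin.sum_univ_three] <;> ring

section MaxEntangled

variable (n : Type*) [Fintype n] [DecidableEq n]

/-- `|Φ⟩⟨Φ|` for `Φ = n^{-1/2} ∑ᵢ |i⟩ ⊗ |i⟩`. -/
noncomputable def maxEntangledState : Matrix (n × n) (n × n) ℂ :=
  let φ : n × n → ℂ := fun p => (1 : Matrix n n ℂ) p.1 p.2
  (Fintype.card n : ℂ)⁻¹ • vecMulVec φ (star φ)

lemma maxEntangledState_posSemidef : (maxEntangledState n).PosSemidef :=
  (posSemidef_vecMulVec_self_star _).smul (by positivity)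

lemma trace_maxEntangledState [Nonempty n] : (maxEntangledState n).trace = 1 := by
  simp [maxEntangledState, trace, vecMulVec_apply, Fintype.sum_prod_type, one_apply]

variable {n}

lemma trace_maxEntangledState_mul_kronecker (P Q : Matrix n n ℂ) :
    (maxEntangledState n * (P ⊗ₖ Q)).trace = (Fintype.card n : ℂ)⁻¹ * (P * Qᵀ).trace := by
  simpa [maxEntangledState, trace, mul_apply, vecMulVec_apply, kroneckerMap_apply,
    Fintype.sum_prod_type, one_apply, Finset.mul_sum] using Finset.sum_comm

end MaxEntangled

theorem hasQuantumModel_pauliDot (a b : Fin 2 → Fin 3 → ℝ) (ha : ∀ i, a i ⬝ᵥ a i = 1)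
    (hb : ∀ j, b j ⬝ᵥ b j = 1) :
    HasQuantumModel (Fin 2 × Fin 2) ![a 0 ⬝ᵥ b 0, a 0 ⬝ᵥ b 1, a 1 ⬝ᵥ b 0, a 1 ⬝ᵥ b 1] := by
  set A : Fin 2 → Matrix (Fin 2 × Fin 2) (Fin 2 × Fin 2) ℂ := fun i => pauliDot (a i) ⊗ₖ 1
  set B : Fin 2 → Matrix (Fin 2 × Fin 2) (Fin 2 × Fin 2) ℂ := fun j => 1 ⊗ₖ (pauliDot (b j))ᵀ
  have hA : ∀ i, (A i).IsHermitian := fun i => (pauliDot_isHermitian _).kronecker isHermitian_one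
  have hB : ∀ j, (B j).IsHermitian := fun j =>
    isHermitian_one.kronecker (pauliDot_isHermitian _).transpose
  have hA_sq : ∀ i, A i * A i = 1 := fun i => by
    simp [A, ← mul_kronecker_mul, pauliDot_mul_self, ha]
  have hB_sq : ∀ j, B j * B j = 1 := fun j => by
    simp [B, ← mul_kronecker_mul, ← transpose_mul, pauliDot_mul_self, hb]
  have hAB : ∀ i j, A i * B j = pauliDot (a i) ⊗ₖ (pauliDot (b j))ᵀ := fun i j => by
    simp [A, B, ← mul_kronecker_mul]
  have hBA : ∀ i j, B j * A i = pauliDot (a i) ⊗ₖ (pauliDot (b j))ᵀ := fun i j => by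
    simp [A, B, ← mul_kronecker_mul]
  have htr : ∀ i j, (maxEntangledState (Fin 2) * A i * B j).trace = (a i ⬝ᵥ b j : ℝ) :=
    fun i j => by
      rw [Matrix.mul_assoc, hAB, trace_maxEntangledState_mul_kronecker, transpose_transpose,
        trace_pauliDot_mul]
      simp
  exact ⟨maxEntangledState (Fin 2), A, B, maxEntangledState_posSemidef _,
    trace_maxEntangledState _, hA, hB,
    fun i => posSemidef_one_sub_of_mul_self_eq_one (hA i) (hA_sq i),
    fun i => posSemidef_one_add_of_mul_self_eq_one (hA i) (hA_sq i),
    fun j => posSemidef_one_sub_of_mul_self_eq_one (hB j) (hB_sq j),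
    fun j => posSemidef_one_add_of_mul_self_eq_one (hB j) (hB_sq j),
    fun i j => (hAB i j).trans (hBA i j).symm, htr 0 0, htr 0 1, htr 1 0, htr 1 1⟩

lemma gram_inequalities_of_posSemidef {u x y : ℝ}
    (h : (!![1, u, x; u, 1, y; x, y, 1] : Matrix (Fin 3) (Fin 3) ℝ).PosSemidef) :
    u ^ 2 ≤ 1 ∧ x ^ 2 ≤ 1 ∧ (y - u * x) ^ 2 ≤ (1 - u ^ 2) * (1 - x ^ 2) := by
  have h₀₁ := (h.submatrix ![0, 1]).det_nonneg
  have h₀₂ := (h.submatrix ![0, 2]).det_nonneg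
  have h₀₁₂ := h.det_nonneg
  rw [det_fin_two] at h₀₁ h₀₂
  rw [det_fin_three] at h₀₁₂
  simp only [submatrix_apply, of_apply, cons_val', cons_val_zero, cons_val_one, cons_val,
    cons_val_fin_one, mul_one, one_mul, sub_nonneg] at h₀₁ h₀₂ h₀₁₂
  exact ⟨by nlinarith, by nlinarith, by nlinarith⟩

lemma exists_unit_vector_dotProduct {u x y : ℝ} (hu : u ^ 2 ≤ 1) (hx : x ^ 2 ≤ 1)
    (h : (y - u * x) ^ 2 ≤ (1 - u ^ 2) * (1 - x ^ 2)) :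
    ∃ b : Fin 3 → ℝ, b ⬝ᵥ b = 1 ∧ ![1, 0, 0] ⬝ᵥ b = x ∧ ![u, √(1 - u ^ 2), 0] ⬝ᵥ b = y := by
  set w := √(1 - u ^ 2)
  have hw : w ^ 2 = 1 - u ^ 2 := Real.sq_sqrt (by linarith)
  set q := (y - u * x) / w
  obtain ⟨hq, hq_le⟩ : w * q = y - u * x ∧ x ^ 2 + q ^ 2 ≤ 1 := by
    rcases eq_or_ne w 0 with hw0 | hw0
    · have hyx : y - u * x = 0 := pow_eq_zero_iff two_ne_zero |>.mp <|
        le_antisymm (by nlinarith) (sq_nonneg _)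
      have hq0 : q = 0 := by simp [q, hw0]
      exact ⟨by rw [hw0, zero_mul, hyx], by rwa [hq0, sq 0, mul_zero, add_zero]⟩
    · have hq : w * q = y - u * x := mul_div_cancel₀ _ hw0
      refine ⟨hq, ?_⟩
      have : w ^ 2 * q ^ 2 ≤ w ^ 2 * (1 - x ^ 2) := by rw [← mul_pow, hq, hw]; exact h
      nlinarith [le_of_mul_le_mul_left this (by positivity)]
  refine ⟨![x, q, √(1 - x ^ 2 - q ^ 2)], ?_, ?_, ?_⟩
  · simp [dotProduct, Fin.sum_univ_three, ← sq, Real.sq_sqrt (by linarith : 0 ≤ 1 - x ^ 2 - q ^ 2)]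
  · simp [dotProduct, Fin.sum_univ_three]
  · simpa [dotProduct, Fin.sum_univ_three] using show u * x + w * q = y by linarith

theorem hasQuantumModel_of_mem_Qbody {c : Fin 4 → ℝ} (hc : c ∈ Qbody) :
    HasQuantumModel (Fin 2 × Fin 2) c := by
  obtain ⟨u, v, hC⟩ := hc
  have hC₀ : (!![1, u, c 0; u, 1, c 2; c 0, c 2, 1] : Matrix (Fin 3) (Fin 3) ℝ).PosSemidef := by
    convert hC.submatrix ![0, 1, 2] using 1
    ext i j; fin_cases i <;> fin_cases j <;> rfl
  have hC₁ : (!![1, u, c 1; u, 1, c 3; c 1, c 3, 1] : Matrix (Fin 3) (Fin 3) ℝ).PosSemidef := by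
    convert hC.submatrix ![0, 1, 3] using 1
    ext i j; fin_cases i <;> fin_cases j <;> rfl
  obtain ⟨hu, hx₀, h₀⟩ := gram_inequalities_of_posSemidef hC₀
  obtain ⟨-, hx₁, h₁⟩ := gram_inequalities_of_posSemidef hC₁
  obtain ⟨b₀, hb₀, h₀₀, h₁₀⟩ := exists_unit_vector_dotProduct hu hx₀ h₀
  obtain ⟨b₁, hb₁, h₀₁, h₁₁⟩ := exists_unit_vector_dotProduct hu hx₁ h₁
  have ha₁ : ![u, √(1 - u ^ 2), 0] ⬝ᵥ ![u, √(1 - u ^ 2), 0] = 1 := by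
    simp [dotProduct, Fin.sum_univ_three, ← sq, Real.sq_sqrt (by linarith : 0 ≤ 1 - u ^ 2)]
  have hc : c = ![![1, 0, 0] ⬝ᵥ b₀, ![1, 0, 0] ⬝ᵥ b₁, ![u, √(1 - u ^ 2), 0] ⬝ᵥ b₀,
      ![u, √(1 - u ^ 2), 0] ⬝ᵥ b₁] := by
    ext k; fin_cases k <;> simp [h₀₀, h₀₁, h₁₀, h₁₁]
  rw [hc]
  exact hasQuantumModel_pauliDot ![![1, 0, 0], ![u, √(1 - u ^ 2), 0]] ![b₀, b₁]
    (fun i => by fin_cases i; exacts [by simp [dotProduct, Fin.sum_univ_three], ha₁])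
    (fun j => by fin_cases j <;> assumption)

theorem stmt18 (c : Fin 4 → ℝ) :
    c ∈ Qbody ↔
      ∃ (ρ : Matrix (Fin 4) (Fin 4) ℂ) (A B : Fin 2 → Matrix (Fin 4) (Fin 4) ℂ),
        ρ.PosSemidef ∧ ρ.trace = 1 ∧
        (∀ i, (A i).IsHermitian) ∧ (∀ j, (B j).IsHermitian) ∧
        (∀ i, (1 - A i).PosSemidef) ∧ (∀ i, (1 + A i).PosSemidef) ∧
        (∀ j, (1 - B j).PosSemidef) ∧ (∀ j, (1 + B j).PosSemidef) ∧
        (∀ i j, A i * B j = B j * A i) ∧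
        (ρ * A 0 * B 0).trace = (c 0 : ℂ) ∧
        (ρ * A 0 * B 1).trace = (c 1 : ℂ) ∧
        (ρ * A 1 * B 0).trace = (c 2 : ℂ) ∧
        (ρ * A 1 * B 1).trace = (c 3 : ℂ) := by
  show c ∈ Qbody ↔ HasQuantumModel (Fin 4) c
  exact ⟨fun hc => (hasQuantumModel_of_mem_Qbody hc).reindex finProdFinEquiv,
    mem_Qbody_of_hasQuantumModel⟩
end
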